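/- arXiv:0910.5247 — 12 statements merged into one kernel-verified Lean document; each statement's English description precedes it below -/
import Mathlib

section
/- Conservative form of the characteristic system. Let c : ℝ → ℝ be continuously differentiable with c(v) > 0 for all v, and let u : ℝ² → ℝ be twice continuously differentiable and satisfy u_tt − c(u)(c(u)u_x)_x = 0 on ℝ². Set R = u_t + c(u)u_x and S = u_t − c(u)u_x. Then at every point of ℝ², ∂_t(R² + S²) − ∂_x(c(u)(R² − S²)) = 0 and ∂_t((R² − S²)/c(u)) − ∂_x(R² + S²) = 0. -/
/-!
Since `R² + S² = 2(u_t² + c(u)²u_x²)` and `R² - S² = 4c(u)u_tu_x`, expanding the two balance laws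
by the product and chain rules leaves `4u_t` (respectively `4u_x`) times the wave operator
`u_tt - c(u)(c(u)u_x)_x`, plus a multiple of `u_tx - u_xt`, which vanishes because `u` is `C²`.
-/

/-- Partial derivative with respect to the first (time) variable. -/
noncomputable def pdt (f : ℝ × ℝ → ℝ) (p : ℝ × ℝ) : ℝ := fderiv ℝ f p (1, 0)

/-- Partial derivative with respect to the second (space) variable. -/
noncomputable def pdx (f : ℝ × ℝ → ℝ) (p : ℝ × ℝ) : ℝ := fderiv ℝ f p (0, 1)

section Calculus

variable {E : Type*} [NormedAddCommGroup E] [NormedSpace ℝ E]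

theorem fderiv_comp_eq_deriv_smul {c : ℝ → ℝ} {u : E → ℝ} {p : E}
    (hc : DifferentiableAt ℝ c (u p)) (hu : DifferentiableAt ℝ u p) :
    fderiv ℝ (fun q => c (u q)) p = deriv c (u p) • fderiv ℝ u p :=
  (hc.hasDerivAt.comp_hasFDerivAt p hu.hasFDerivAt).fderiv

theorem ContDiff.differentiable_fderiv_apply {u : E → ℝ} (hu : ContDiff ℝ 2 u) (v : E) :
    Differentiable ℝ (fun q => fderiv ℝ u q v) :=
  ((hu.fderiv_right one_add_one_eq_two.le).clm_apply contDiff_const).differentiable one_ne_zero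

theorem ContDiff.fderiv_fderiv_apply_comm {u : E → ℝ} (hu : ContDiff ℝ 2 u) (p v w : E) :
    fderiv ℝ (fun q => fderiv ℝ u q v) p w = fderiv ℝ (fun q => fderiv ℝ u q w) p v := by
  have hsymm := hu.contDiffAt.isSymmSndFDerivAt (x := p) (by simp)
  have hdiff := (hu.fderiv_right one_add_one_eq_two.le).differentiable one_ne_zero p
  simp only [fderiv_clm_apply hdiff (differentiableAt_const _), fderiv_fun_const]
  simpa using hsymm w v

end Calculus

noncomputable def waveResidual (c : ℝ → ℝ) (u : ℝ × ℝ → ℝ) (p : ℝ × ℝ) : ℝ :=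
  pdt (pdt u) p - c (u p) * pdx (fun q => c (u q) * pdx u q) p

noncomputable def riemannR (c : ℝ → ℝ) (u : ℝ × ℝ → ℝ) (p : ℝ × ℝ) : ℝ :=
  pdt u p + c (u p) * pdx u p

noncomputable def riemannS (c : ℝ → ℝ) (u : ℝ × ℝ → ℝ) (p : ℝ × ℝ) : ℝ :=
  pdt u p - c (u p) * pdx u p

section Balance

variable {c : ℝ → ℝ} {u : ℝ × ℝ → ℝ}

theorem pdt_energy_sub_pdx_flux (hc : ContDiff ℝ 1 c) (hu : ContDiff ℝ 2 u) (p : ℝ × ℝ) :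
    pdt (fun q => riemannR c u q ^ 2 + riemannS c u q ^ 2) p
        - pdx (fun q => c (u q) * (riemannR c u q ^ 2 - riemannS c u q ^ 2)) p
      = 4 * pdt u p * waveResidual c u p := by
  have hc' : Differentiable ℝ c := hc.differentiable one_ne_zero
  have hu' : Differentiable ℝ u := hu.differentiable two_ne_zero
  have hT : Differentiable ℝ (fun q => fderiv ℝ u q (1, 0)) := hu.differentiable_fderiv_apply _
  have hX : Differentiable ℝ (fun q => fderiv ℝ u q (0, 1)) := hu.differentiable_fderiv_apply _
  have hsym := hu.fderiv_fderiv_apply_comm p (0, 1) (1, 0)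
  unfold waveResidual riemannR riemannS pdt pdx
  simp (disch := fun_prop) only [fderiv_fun_mul, fderiv_fun_add, fderiv_fun_sub, fderiv_fun_pow,
    fderiv_comp_eq_deriv_smul, add_apply, sub_apply, smul_apply, smul_eq_mul]
  linear_combination (4 * c (u p) ^ 2 * fderiv ℝ u p (0, 1)) * hsym

theorem pdt_momentum_sub_pdx_energy (hc : ContDiff ℝ 1 c) (hc0 : ∀ v, c v ≠ 0)
    (hu : ContDiff ℝ 2 u) (p : ℝ × ℝ) :
    pdt (fun q => (riemannR c u q ^ 2 - riemannS c u q ^ 2) / c (u q)) p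
        - pdx (fun q => riemannR c u q ^ 2 + riemannS c u q ^ 2) p
      = 4 * pdx u p * waveResidual c u p := by
  have hmomentum : (fun q => (riemannR c u q ^ 2 - riemannS c u q ^ 2) / c (u q))
      = fun q => 4 * (pdt u q * pdx u q) := by
    funext q
    rw [div_eq_iff (hc0 _), riemannR, riemannS]
    ring
  have hc' : Differentiable ℝ c := hc.differentiable one_ne_zero
  have hu' : Differentiable ℝ u := hu.differentiable two_ne_zero
  have hT : Differentiable ℝ (fun q => fderiv ℝ u q (1, 0)) := hu.differentiable_fderiv_apply _
  have hX : Differentiable ℝ (fun q => fderiv ℝ u q (0, 1)) := hu.differentiable_fderiv_apply _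
  have hsym := hu.fderiv_fderiv_apply_comm p (0, 1) (1, 0)
  rw [hmomentum]
  unfold waveResidual riemannR riemannS pdt pdx
  simp (disch := fun_prop) only [fderiv_fun_mul, fderiv_fun_add, fderiv_fun_sub, fderiv_fun_pow,
    fderiv_const_apply, fderiv_comp_eq_deriv_smul, add_apply, sub_apply, smul_apply, smul_eq_mul,
    zero_apply]
  linear_combination (4 * fderiv ℝ u p (1, 0)) * hsym

end Balance

/-- Conservative form of the characteristic system: if `c` is `C¹`
with `c > 0` and `u` is a `C²` solution of `u_tt - c(u)(c(u)u_x)_x = 0`, then with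
`R = u_t + c(u)u_x` and `S = u_t - c(u)u_x`, at every point
`∂_t (R² + S²) - ∂_x (c(u)(R² - S²)) = 0` and
`∂_t ((R² - S²)/c(u)) - ∂_x (R² + S²) = 0`. -/
theorem nvw_conservative_form
    (c : ℝ → ℝ) (hc : ContDiff ℝ 1 c) (hcpos : ∀ v : ℝ, 0 < c v)
    (u : ℝ × ℝ → ℝ) (hu : ContDiff ℝ 2 u)
    (heq : ∀ p : ℝ × ℝ,
      pdt (pdt u) p - c (u p) * pdx (fun q => c (u q) * pdx u q) p = 0)
    (R S : ℝ × ℝ → ℝ)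
    (hR : ∀ p : ℝ × ℝ, R p = pdt u p + c (u p) * pdx u p)
    (hS : ∀ p : ℝ × ℝ, S p = pdt u p - c (u p) * pdx u p) :
    ∀ p : ℝ × ℝ,
      pdt (fun q => R q ^ 2 + S q ^ 2) p
          - pdx (fun q => c (u q) * (R q ^ 2 - S q ^ 2)) p = 0 ∧
      pdt (fun q => (R q ^ 2 - S q ^ 2) / c (u q)) p
          - pdx (fun q => R q ^ 2 + S q ^ 2) p = 0 := by
  obtain rfl : R = riemannR c u := funext hR
  obtain rfl : S = riemannS c u := funext hS
  intro p
  have hres : waveResidual c u p = 0 := heq p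
  constructor
  · rw [pdt_energy_sub_pdx_flux hc hu, hres, mul_zero]
  · rw [pdt_momentum_sub_pdx_energy hc (fun v => (hcpos v).ne') hu, hres, mul_zero]
end

section
/- Energy conservation for smooth solutions. Let c : ℝ → ℝ be continuously differentiable with c(v) > 0 for all v, let a < b, and let u : ℝ² → ℝ be twice continuously differentiable and satisfy u_tt − c(u)(c(u)u_x)_x = 0. Assume there exists M > 0 such that u_t(t,x) = 0 and u_x(t,x) = 0 whenever |x| ≥ M and t ∈ [a,b]. Then the energy E(t) = ∫_ℝ (u_t(t,x)² + c(u(t,x))² u_x(t,x)²) dx is constant on [a,b]. -/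
open MeasureTheory

/-!
The energy density `e = u_t² + c(u)² u_x²` and the flux `F = 2 c(u)² u_t u_x` satisfy the local
conservation law `e_t = F_x`: differentiating `e` in `t`, the equation turns `u_t u_tt` into
`u_t c(u) (c(u) u_x)_x`, and the symmetry `u_xt = u_tx` of second derivatives makes the result an
exact `x`-derivative. Green's theorem on `[t', t] × [-|M|, |M|]` then equates the change of energy
with the flux through the lines `x = ±|M|`, which vanishes because `u_t = u_x = 0` there.
-/

@[fun_prop]
theorem differentiable_pdt {f : ℝ × ℝ → ℝ} (hf : ContDiff ℝ 2 f) :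
    Differentiable ℝ (pdt f) :=
  ((hf.fderiv_right (m := 1) le_rfl).clm_apply contDiff_const).differentiable one_ne_zero

@[fun_prop]
theorem differentiable_pdx {f : ℝ × ℝ → ℝ} (hf : ContDiff ℝ 2 f) :
    Differentiable ℝ (pdx f) :=
  ((hf.fderiv_right (m := 1) le_rfl).clm_apply contDiff_const).differentiable one_ne_zero

theorem pdx_pdt_comm {u : ℝ × ℝ → ℝ} (hu : ContDiff ℝ 2 u) (p : ℝ × ℝ) :
    pdx (pdt u) p = pdt (pdx u) p := by
  have hd : DifferentiableAt ℝ (fderiv ℝ u) p :=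
    (hu.fderiv_right (m := 1) le_rfl).differentiable one_ne_zero p
  have hsymm := (hu.contDiffAt (x := p)).isSymmSndFDerivAt (by simp) (1, 0) (0, 1)
  change fderiv ℝ (fun q => fderiv ℝ u q (1, 0)) p (0, 1)
    = fderiv ℝ (fun q => fderiv ℝ u q (0, 1)) p (1, 0)
  rw [fderiv_clm_apply hd (differentiableAt_const _),
    fderiv_clm_apply hd (differentiableAt_const _)]
  simpa using hsymm.symm

theorem intervalIntegral_sub_eq_of_pdt_eq_pdx {e F : ℝ × ℝ → ℝ}
    (he : Differentiable ℝ e) (hF : Differentiable ℝ F) (hflux : ∀ p, pdt e p = pdx F p)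
    (t t' α β : ℝ) :
    (∫ x in α..β, e (t, x)) - ∫ x in α..β, e (t', x)
      = (∫ s in t'..t, F (s, β)) - ∫ s in t'..t, F (s, α) := by
  have hdiv : ∀ q, fderiv ℝ e q (1, 0) + (-fderiv ℝ F q) (0, 1) = 0 := fun q => by
    simpa [pdt, pdx, sub_eq_add_neg] using sub_eq_zero.mpr (hflux q)
  have hgreen := integral2_divergence_prod_of_hasFDerivAt e (fun q => -F q)
    (fderiv ℝ e) (fun q => -fderiv ℝ F q) t' α t β he.continuous.continuousOn
    hF.continuous.neg.continuousOn (fun q _ => (he q).hasFDerivAt)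
    (fun q _ => (hF q).hasFDerivAt.neg) (by simp only [hdiv]; exact integrableOn_zero)
  simp only [hdiv, intervalIntegral.integral_zero, intervalIntegral.integral_neg] at hgreen
  linarith

theorem integral_eq_intervalIntegral_of_eq_zero {f : ℝ → ℝ} {M : ℝ}
    (hf : ∀ x, M ≤ |x| → f x = 0) : ∫ x, f x = ∫ x in -|M|..|M|, f x := by
  rw [intervalIntegral.integral_of_le (neg_le_self (abs_nonneg M))]
  refine (setIntegral_eq_integral_of_forall_compl_eq_zero fun x hx => hf x ?_).symm
  rw [Set.mem_Ioc, not_and_or, not_lt, not_le] at hx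
  rcases hx with hx | hx
  · exact (le_abs_self M).trans (le_neg.mp hx |>.trans (neg_le_abs x))
  · exact (le_abs_self M).trans (hx.le.trans (le_abs_self x))

section Energy

variable {c : ℝ → ℝ} {u : ℝ × ℝ → ℝ}

noncomputable def energyDensity (c : ℝ → ℝ) (u : ℝ × ℝ → ℝ) (q : ℝ × ℝ) : ℝ :=
  pdt u q ^ 2 + c (u q) ^ 2 * pdx u q ^ 2

noncomputable def energyFlux (c : ℝ → ℝ) (u : ℝ × ℝ → ℝ) (q : ℝ × ℝ) : ℝ :=
  2 * c (u q) ^ 2 * pdt u q * pdx u q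

theorem differentiable_energyDensity (hc : Differentiable ℝ c) (hu : ContDiff ℝ 2 u) :
    Differentiable ℝ (energyDensity c u) := by
  unfold energyDensity
  fun_prop (disch := norm_num)

theorem differentiable_energyFlux (hc : Differentiable ℝ c) (hu : ContDiff ℝ 2 u) :
    Differentiable ℝ (energyFlux c u) := by
  unfold energyFlux
  fun_prop (disch := norm_num)

theorem pdt_energyDensity_eq_pdx_energyFlux (hc : Differentiable ℝ c) (hu : ContDiff ℝ 2 u)
    (heq : ∀ p, pdt (pdt u) p - c (u p) * pdx (fun q => c (u q) * pdx u q) p = 0)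
    (p : ℝ × ℝ) : pdt (energyDensity c u) p = pdx (energyFlux c u) p := by
  have hu' : Differentiable ℝ u := hu.differentiable two_ne_zero
  have hut := differentiable_pdt hu
  have hux := differentiable_pdx hu
  have hpde := heq p
  have hschwarz := pdx_pdt_comm hu p
  rw [pdt, pdx] at hpde hschwarz ⊢
  unfold energyDensity energyFlux
  simp (disch := fun_prop) only [fderiv_fun_add, fderiv_fun_mul, fderiv_fun_pow,
    fderiv_fun_comp, fderiv_fun_const, fderiv_eq_smul_deriv, add_apply, smul_apply,
    ContinuousLinearMap.comp_apply, Pi.zero_apply, smul_eq_mul, nsmul_eq_mul, smul_zero,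
    smul_add, add_zero, Nat.add_one_sub_one, pow_one, Nat.cast_ofNat,
    show fderiv ℝ u p (1, 0) = pdt u p from rfl, show fderiv ℝ u p (0, 1) = pdx u p from rfl]
    at hpde ⊢
  linear_combination (2 * pdt u p) * hpde - (2 * c (u p) ^ 2 * pdx u p) * hschwarz

end Energy

theorem nvw_energy_conservation_general
    (c : ℝ → ℝ) (hc : ContDiff ℝ 1 c)
    (a b : ℝ)
    (u : ℝ × ℝ → ℝ) (hu : ContDiff ℝ 2 u)
    (heq : ∀ p : ℝ × ℝ,
      pdt (pdt u) p - c (u p) * pdx (fun q => c (u q) * pdx u q) p = 0)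
    (M : ℝ)
    (hsupp : ∀ t x : ℝ, t ∈ Set.Icc a b → M ≤ |x| →
      pdt u (t, x) = 0 ∧ pdx u (t, x) = 0) :
    ∀ t ∈ Set.Icc a b, ∀ t' ∈ Set.Icc a b,
      (∫ x : ℝ, ((pdt u (t, x)) ^ 2 + (c (u (t, x))) ^ 2 * (pdx u (t, x)) ^ 2))
        = ∫ x : ℝ, ((pdt u (t', x)) ^ 2 + (c (u (t', x))) ^ 2 * (pdx u (t', x)) ^ 2) := by
  intro t ht t' ht'
  have hc' : Differentiable ℝ c := hc.differentiable one_ne_zero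
  have hdensity : ∀ s ∈ Set.Icc a b, ∀ x, M ≤ |x| → energyDensity c u (s, x) = 0 :=
    fun s hs x hx => by simp [energyDensity, hsupp s x hs hx]
  have hboundary : ∀ x, M ≤ |x| → ∫ s in t'..t, energyFlux c u (s, x) = 0 := fun x hx => by
    rw [intervalIntegral.integral_congr (g := fun _ => 0) fun s hs =>
      by simp [energyFlux, hsupp s x (Set.uIcc_subset_Icc ht' ht hs) hx]]
    simp
  change ∫ x, energyDensity c u (t, x) = ∫ x, energyDensity c u (t', x)
  rw [integral_eq_intervalIntegral_of_eq_zero (hdensity t ht),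
    integral_eq_intervalIntegral_of_eq_zero (hdensity t' ht'), ← sub_eq_zero,
    intervalIntegral_sub_eq_of_pdt_eq_pdx (differentiable_energyDensity hc' hu)
      (differentiable_energyFlux hc' hu) (pdt_energyDensity_eq_pdx_energyFlux hc' hu heq),
    hboundary _ (by simp [le_abs_self]), hboundary _ (by simp [le_abs_self]), sub_zero]

/-- Energy conservation for smooth solutions: if `c` is `C¹` with
`c > 0`, `u` is a `C²` solution of `u_tt - c(u)(c(u)u_x)_x = 0`, and `u_t`, `u_x`
vanish for `|x| ≥ M`, `t ∈ [a,b]`, then the energy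
`E(t) = ∫ (u_t² + c(u)² u_x²) dx` is constant on `[a,b]`. -/
theorem nvw_energy_conservation
    (c : ℝ → ℝ) (hc : ContDiff ℝ 1 c) (hcpos : ∀ v : ℝ, 0 < c v)
    (a b : ℝ) (hab : a < b)
    (u : ℝ × ℝ → ℝ) (hu : ContDiff ℝ 2 u)
    (heq : ∀ p : ℝ × ℝ,
      pdt (pdt u) p - c (u p) * pdx (fun q => c (u q) * pdx u q) p = 0)
    (M : ℝ) (hM : 0 < M)
    (hsupp : ∀ t x : ℝ, t ∈ Set.Icc a b → M ≤ |x| →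
      pdt u (t, x) = 0 ∧ pdx u (t, x) = 0) :
    ∀ t ∈ Set.Icc a b, ∀ t' ∈ Set.Icc a b,
      (∫ x : ℝ, ((pdt u (t, x)) ^ 2 + (c (u (t, x))) ^ 2 * (pdx u (t, x)) ^ 2))
        = ∫ x : ℝ, ((pdt u (t', x)) ^ 2 + (c (u (t', x))) ^ 2 * (pdx u (t', x)) ^ 2) :=
  nvw_energy_conservation_general c hc a b u hu heq M hsupp
end

section
/- Let f : ℝ → ℝ be nondecreasing and Lipschitz continuous, and let B ⊆ ℝ be a set of Lebesgue measure zero. Then for Lebesgue-almost every x ∈ f⁻¹(B), f is differentiable at x and f'(x) = 0. -/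
/-!
A nonzero derivative of a monotone function at `x` forbids `f` from being constant on any
interval starting or ending at `x`, so `f` is injective on the set where `f' ≠ 0`. The change of
variables inequality `∫_s |f'| ≤ |f '' s|` for injective `f` then shows that the part of `f⁻¹ B`
where `f' ≠ 0` is null, since its image lies in the null set `B`. Lebesgue's theorem that monotone
functions are differentiable almost everywhere does the rest.
-/

open MeasureTheory Set

theorem ae_det_fderivWithin_eq_zero_of_addHaar_image_eq_zero
    {E : Type*} [NormedAddCommGroup E] [NormedSpace ℝ E] [FiniteDimensional ℝ E]
    [MeasurableSpace E] [BorelSpace E] (μ : Measure E) [μ.IsAddHaarMeasure]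
    {f : E → E} {f' : E → E →L[ℝ] E} {s : Set E} (hs : MeasurableSet s)
    (hf' : ∀ x ∈ s, HasFDerivWithinAt f (f' x) s x) (hf : InjOn f s)
    (himage : μ (f '' s) = 0) :
    ∀ᵐ x ∂μ.restrict s, (f' x).det = 0 := by
  have hint : ∫⁻ x in s, ENNReal.ofReal |(f' x).det| ∂μ = 0 := by
    rw [lintegral_abs_det_fderiv_eq_addHaar_image μ hs hf' hf, himage]
  filter_upwards [(lintegral_eq_zero_iff'
    (aemeasurable_ofReal_abs_det_fderivWithin μ hs hf')).1 hint] with x hx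
  simpa using hx

theorem Monotone.deriv_eq_zero_of_lt_of_eq {f : ℝ → ℝ} (hf : Monotone f) {x y : ℝ}
    (hxy : x < y) (hfxy : f x = f y) : deriv f x = 0 := by
  by_cases hdiff : DifferentiableAt ℝ f x
  · have hconst : ∀ t ∈ Icc x y, f t = f x := fun t ht =>
      le_antisymm (hfxy ▸ hf ht.2) (hf ht.1)
    have hu : UniqueDiffWithinAt ℝ (Icc x y) x := uniqueDiffOn_Icc hxy x (left_mem_Icc.2 hxy.le)
    rw [← hdiff.derivWithin hu, derivWithin_congr hconst (hconst x (left_mem_Icc.2 hxy.le))]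
    exact congrFun (derivWithin_fun_const _ _) x
  · exact deriv_zero_of_not_differentiableAt hdiff

theorem Monotone.injOn_setOf_deriv_ne_zero {f : ℝ → ℝ} (hf : Monotone f) :
    InjOn f {x | deriv f x ≠ 0} := by
  intro x hx y hy hfxy
  rcases lt_trichotomy x y with hlt | heq | hgt
  · exact absurd (hf.deriv_eq_zero_of_lt_of_eq hlt hfxy) hx
  · exact heq
  · exact absurd (hf.deriv_eq_zero_of_lt_of_eq hgt hfxy.symm) hy

theorem Monotone.volume_preimage_inter_setOf_deriv_ne_zero {f : ℝ → ℝ} (hf : Monotone f)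
    {G : Set ℝ} (hGm : MeasurableSet G) (hG : volume G = 0) :
    volume (f ⁻¹' G ∩ {x | deriv f x ≠ 0}) = 0 := by
  set s := f ⁻¹' G ∩ {x | deriv f x ≠ 0}
  have hs : MeasurableSet s :=
    (hf.measurable hGm).inter (measurable_deriv f (measurableSet_singleton 0).compl)
  have hderiv :
      ∀ x ∈ s, HasFDerivWithinAt f (ContinuousLinearMap.toSpanSingleton ℝ (deriv f x)) s x :=
    fun x hx => (differentiableAt_of_deriv_ne_zero hx.2).hasDerivAt.hasFDerivAt.hasFDerivWithinAt
  have himage : volume (f '' s) = 0 :=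
    measure_mono_null ((image_mono inter_subset_left).trans (image_preimage_subset f G)) hG
  have hdet := ae_det_fderivWithin_eq_zero_of_addHaar_image_eq_zero volume hs hderiv
    (hf.injOn_setOf_deriv_ne_zero.mono inter_subset_right) himage
  rw [← Measure.restrict_eq_zero, ← ae_eq_bot, ← Filter.eventually_false_iff_eq_bot]
  filter_upwards [hdet, ae_restrict_mem hs] with x hx hxs
  exact hxs.2 (by simpa only [ContinuousLinearMap.det_toSpanSingleton] using hx)

theorem monotone_lipschitz_deriv_zero_on_preimage_null_general
    (f : ℝ → ℝ) (hmono : Monotone f)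
    (B : Set ℝ) (hB : volume B = 0) :
    ∀ᵐ x ∂(volume.restrict (f ⁻¹' B)), HasDerivAt f 0 x := by
  obtain ⟨G, hBG, hGm, hG0⟩ := exists_measurable_superset_of_null hB
  have hnull := measure_eq_zero_iff_ae_notMem.1
    (hmono.volume_preimage_inter_setOf_deriv_ne_zero hGm hG0)
  refine ae_restrict_of_ae_restrict_of_subset (preimage_mono hBG) ?_
  rw [ae_restrict_iff' (hmono.measurable hGm)]
  filter_upwards [hmono.ae_differentiableAt, hnull] with x hdiff hx hxG
  have hderiv : deriv f x = 0 := by simpa [hxG] using hx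
  exact hderiv ▸ hdiff.hasDerivAt

/-- If `f : ℝ → ℝ` is nondecreasing and Lipschitz and `B ⊆ ℝ` has
Lebesgue measure zero, then for Lebesgue-a.e. `x ∈ f ⁻¹' B`, `f` is differentiable
at `x` with derivative `0`. -/
theorem monotone_lipschitz_deriv_zero_on_preimage_null
    (f : ℝ → ℝ) (K : NNReal) (hmono : Monotone f) (hlip : LipschitzWith K f)
    (B : Set ℝ) (hB : volume B = 0) :
    ∀ᵐ x ∂(volume.restrict (f ⁻¹' B)), HasDerivAt f 0 x :=
  monotone_lipschitz_deriv_zero_on_preimage_null_general f hmono B hB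
end

section
/- Construction of the initial curve from a pair of nondecreasing functions. Let x₁, x₂ : ℝ → ℝ be continuous nondecreasing functions such that x₁ − id and x₂ − id are bounded. For s ∈ ℝ define 𝒳(s) = sup{ X ∈ ℝ : x₁(X') < x₂(2s − X') for all X' < X } and 𝒴(s) = 2s − 𝒳(s). Then: (i) for every s the supremum is over a nonempty set bounded above, so 𝒳(s) ∈ ℝ, and x₁(𝒳(s)) = x₂(𝒴(s)); (ii) 𝒳 and 𝒴 are nondecreasing; (iii) |𝒳(s) − 𝒳(s̄)| ≤ 2|s − s̄| for all s, s̄ ∈ ℝ (so 𝒳 and 𝒴 are Lipschitz with constant 2); (iv) |𝒳(s) − s| ≤ ½( sup|x₁ − id| + sup|x₂ − id| ) for all s ∈ ℝ. -/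
/-- Construction of the initial curve from a pair of continuous
nondecreasing functions `x₁, x₂` with `x₁ - id`, `x₂ - id` bounded (by `C₁`, `C₂`):
with `𝒳 s = sup {X | x₁ X' < x₂ (2s - X') for all X' < X}` and `𝒴 s = 2s - 𝒳 s`,
the defining set is nonempty and bounded above, `x₁ (𝒳 s) = x₂ (𝒴 s)`, `𝒳` and `𝒴`
are nondecreasing, `𝒳` is Lipschitz with constant `2`, and `|𝒳 s - s| ≤ (C₁ + C₂)/2`. -/
theorem initial_curve_construction
    (x₁ x₂ : ℝ → ℝ) (h₁c : Continuous x₁) (h₂c : Continuous x₂)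
    (h₁m : Monotone x₁) (h₂m : Monotone x₂)
    (C₁ C₂ : ℝ) (h₁b : ∀ x : ℝ, |x₁ x - x| ≤ C₁) (h₂b : ∀ x : ℝ, |x₂ x - x| ≤ C₂)
    (𝒳 𝒴 : ℝ → ℝ)
    (h𝒳 : ∀ s : ℝ, 𝒳 s = sSup {X : ℝ | ∀ X' < X, x₁ X' < x₂ (2 * s - X')})
    (h𝒴 : ∀ s : ℝ, 𝒴 s = 2 * s - 𝒳 s) :
    (∀ s : ℝ, {X : ℝ | ∀ X' < X, x₁ X' < x₂ (2 * s - X')}.Nonempty ∧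
        BddAbove {X : ℝ | ∀ X' < X, x₁ X' < x₂ (2 * s - X')}) ∧
    (∀ s : ℝ, x₁ (𝒳 s) = x₂ (𝒴 s)) ∧
    Monotone 𝒳 ∧ Monotone 𝒴 ∧
    (∀ s s' : ℝ, |𝒳 s - 𝒳 s'| ≤ 2 * |s - s'|) ∧
    (∀ s : ℝ, |𝒳 s - s| ≤ (C₁ + C₂) / 2) := by
  -- the defining set is contained in Iic (s + ((C₁ + C₂) / 2))
  have hSub : ∀ s : ℝ, {X : ℝ | ∀ X' < X, x₁ X' < x₂ (2 * s - X')} ⊆ Set.Iic (s + ((C₁ + C₂) / 2)) := by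
    intro s X hX
    by_contra h
    simp only [Set.mem_Iic, not_le] at h
    have hlt : (s + ((C₁ + C₂) / 2) + X) / 2 < X := by linarith
    have h2 := hX ((s + ((C₁ + C₂) / 2) + X) / 2) hlt
    have h1 := h₁b ((s + ((C₁ + C₂) / 2) + X) / 2)
    have h3 := h₂b (2 * s - (s + ((C₁ + C₂) / 2) + X) / 2)
    rw [abs_le] at h1 h3
    have : s + ((C₁ + C₂) / 2) < (s + ((C₁ + C₂) / 2) + X) / 2 := by linarith
    linarith [h1.1, h3.2]
  have hBdd : ∀ s : ℝ, BddAbove {X : ℝ | ∀ X' < X, x₁ X' < x₂ (2 * s - X')} :=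
    fun s => ⟨s + ((C₁ + C₂) / 2), hSub s⟩
  have hMem : ∀ s : ℝ, (s - ((C₁ + C₂) / 2)) ∈ {X : ℝ | ∀ X' < X, x₁ X' < x₂ (2 * s - X')} := by
    intro s X' hX'
    have h1 := h₁b X'
    have h3 := h₂b (2 * s - X')
    rw [abs_le] at h1 h3
    linarith [h1.2, h3.1]
  have hNe : ∀ s : ℝ, ({X : ℝ | ∀ X' < X, x₁ X' < x₂ (2 * s - X')}).Nonempty :=
    fun s => ⟨s - ((C₁ + C₂) / 2), hMem s⟩
  -- the root property
  have hroot : ∀ s : ℝ, x₁ (𝒳 s) = x₂ (2 * s - 𝒳 s) := by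
    intro s
    rw [h𝒳 s]
    set a := sSup {X : ℝ | ∀ X' < X, x₁ X' < x₂ (2 * s - X')} with ha
    have hle : x₁ a ≤ x₂ (2 * s - a) := by
      by_contra h
      simp only [Set.mem_Iic, not_le] at h
      have hU : IsOpen {x : ℝ | x₂ (2 * s - x) < x₁ x} :=
        isOpen_lt (h₂c.comp (by continuity)) h₁c
      obtain ⟨ε, hε, hball⟩ := Metric.isOpen_iff.mp hU a h
      obtain ⟨X, hXS, hX⟩ := exists_lt_of_lt_csSup (hNe s) (show a - ε / 2 < a by linarith)
      have hb : a - ε / 2 ∈ Metric.ball a ε := by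
        rw [Metric.mem_ball, Real.dist_eq]
        rw [abs_of_nonpos (by linarith)]
        linarith
      have h1 := hball hb
      have h2 := hXS (a - ε / 2) hX
      simp only [Set.mem_setOf_eq] at h1
      linarith
    have hge : x₂ (2 * s - a) ≤ x₁ a := by
      by_contra h
      simp only [Set.mem_Iic, not_le] at h
      have hU : IsOpen {x : ℝ | x₁ x < x₂ (2 * s - x)} :=
        isOpen_lt h₁c (h₂c.comp (by continuity))
      obtain ⟨ε, hε, hball⟩ := Metric.isOpen_iff.mp hU a h
      have hmem : a + ε / 2 ∈ {X : ℝ | ∀ X' < X, x₁ X' < x₂ (2 * s - X')} := by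
        intro X' hX'
        by_cases hc : a < X'
        · have hb : X' ∈ Metric.ball a ε := by
            rw [Metric.mem_ball, Real.dist_eq, abs_of_nonneg (by linarith)]
            linarith
          exact hball hb
        · push_neg at hc
          have h1 : x₁ X' ≤ x₁ a := h₁m hc
          have h2 : x₂ (2 * s - a) ≤ x₂ (2 * s - X') := h₂m (by linarith)
          linarith
      have := le_csSup (hBdd s) hmem
      linarith
    linarith
  -- monotonicity of 𝒳
  have hmono : Monotone 𝒳 := by
    intro s s' hss
    rw [h𝒳 s, h𝒳 s']
    apply csSup_le_csSup (hBdd s') (hNe s)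
    intro X hX X' hX'
    exact lt_of_lt_of_le (hX X' hX') (h₂m (by linarith))
  -- Lipschitz upper bound
  have hlip : ∀ s s' : ℝ, s ≤ s' → 𝒳 s' ≤ 𝒳 s + 2 * (s' - s) := by
    intro s s' hss
    rw [h𝒳 s', h𝒳 s]
    apply csSup_le (hNe s')
    intro X hX
    have hmem : X - 2 * (s' - s) ∈ {X : ℝ | ∀ X' < X, x₁ X' < x₂ (2 * s - X')} := by
      intro X' hX'
      have h1 : x₁ X' ≤ x₁ (X' + 2 * (s' - s)) := h₁m (by linarith)
      have h2 := hX (X' + 2 * (s' - s)) (by linarith)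
      have h3 : 2 * s' - (X' + 2 * (s' - s)) = 2 * s - X' := by ring
      rw [h3] at h2
      linarith
    have := le_csSup (hBdd s) hmem
    linarith
  -- bound |𝒳 s - s| ≤ ((C₁ + C₂) / 2)
  have hbound : ∀ s : ℝ, |𝒳 s - s| ≤ ((C₁ + C₂) / 2) := by
    intro s
    rw [abs_le]
    constructor
    · have := le_csSup (hBdd s) (hMem s)
      rw [h𝒳 s]
      linarith
    · have : 𝒳 s ≤ s + ((C₁ + C₂) / 2) := by
        rw [h𝒳 s]
        exact csSup_le (hNe s) (fun X hX => hSub s hX)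
      linarith
  refine ⟨fun s => ⟨hNe s, hBdd s⟩, ?_, hmono, ?_, ?_, hbound⟩
  · intro s
    rw [h𝒴 s]
    exact hroot s
  · intro s s' hss
    rw [h𝒴 s, h𝒴 s']
    have := hlip s s' hss
    linarith
  · intro s s'
    rcases le_total s s' with h | h
    · have h1 := hmono h
      have h2 := hlip s s' h
      rw [abs_of_nonpos (by linarith : 𝒳 s - 𝒳 s' ≤ 0), abs_of_nonpos (by linarith : s - s' ≤ 0)]
      linarith
    · have h1 := hmono h
      have h2 := hlip s' s h
      rw [abs_of_nonneg (by linarith : 0 ≤ 𝒳 s - 𝒳 s'), abs_of_nonneg (by linarith : 0 ≤ s - s')]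
      linarith
end

section
/- Extraction of a level curve of a monotone function of two variables. Let t : ℝ² → ℝ be continuous, with X ↦ t(X,Y) nondecreasing for every fixed Y and Y ↦ t(X,Y) nonincreasing for every fixed X. Assume that for every s ∈ ℝ the set A_s = { X ∈ ℝ : t(X', 2s − X') < 0 for all X' < X } is nonempty and bounded above, and define 𝒳(s) = sup A_s and 𝒴(s) = 2s − 𝒳(s). Then: (i) t(𝒳(s), 𝒴(s)) = 0 for every s; (ii) 𝒳 is nondecreasing; (iii) |𝒳(s) − 𝒳(s̄)| ≤ 2|s − s̄| for all s, s̄ ∈ ℝ. -/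
open Set Filter Topology

/-- Extraction of a level curve of a continuous function `f : ℝ² → ℝ`
which is nondecreasing in the first variable and nonincreasing in the second.
If for every `s` the set `A_s = {X | f (X', 2s - X') < 0 for all X' < X}` is nonempty
and bounded above and `𝒳 s = sup A_s`, `𝒴 s = 2s - 𝒳 s`, then `f (𝒳 s, 𝒴 s) = 0`,
`𝒳` is nondecreasing and Lipschitz with constant `2`. -/
theorem level_curve_extraction
    (f : ℝ × ℝ → ℝ) (hf : Continuous f)
    (hmX : ∀ Y : ℝ, Monotone fun X => f (X, Y))
    (hmY : ∀ X : ℝ, Antitone fun Y => f (X, Y))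
    (hA : ∀ s : ℝ, {X : ℝ | ∀ X' < X, f (X', 2 * s - X') < 0}.Nonempty ∧
        BddAbove {X : ℝ | ∀ X' < X, f (X', 2 * s - X') < 0})
    (𝒳 𝒴 : ℝ → ℝ)
    (h𝒳 : ∀ s : ℝ, 𝒳 s = sSup {X : ℝ | ∀ X' < X, f (X', 2 * s - X') < 0})
    (h𝒴 : ∀ s : ℝ, 𝒴 s = 2 * s - 𝒳 s) :
    (∀ s : ℝ, f (𝒳 s, 𝒴 s) = 0) ∧
    Monotone 𝒳 ∧
    (∀ s s' : ℝ, |𝒳 s - 𝒳 s'| ≤ 2 * |s - s'|) := by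
  have hmem : ∀ s : ℝ, ∀ X' < 𝒳 s, f (X', 2 * s - X') < 0 := by
    intro s X' hX'
    rw [h𝒳 s] at hX'
    obtain ⟨X, hX, hlt⟩ := exists_lt_of_lt_csSup (hA s).1 hX'
    exact hX X' hlt
  have gmono : ∀ s : ℝ, Monotone fun X : ℝ => f (X, 2 * s - X) := by
    intro s a b hab
    exact le_trans (hmX (2 * s - a) hab) (hmY b (by linarith))
  have gcont : ∀ s : ℝ, Continuous fun X : ℝ => f (X, 2 * s - X) :=
    fun s => hf.comp (continuous_id.prodMk (continuous_const.sub continuous_id))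
  have hzero : ∀ s : ℝ, f (𝒳 s, 𝒴 s) = 0 := by
    intro s
    rw [h𝒴 s]
    have hle : f (𝒳 s, 2 * s - 𝒳 s) ≤ 0 := by
      have lim : Tendsto (fun n : ℕ => 𝒳 s - 1 / (n + 1)) atTop (𝓝 (𝒳 s)) := by
        have h1 : Tendsto (fun n : ℕ => (1 : ℝ) / (n + 1)) atTop (𝓝 0) :=
          tendsto_one_div_add_atTop_nhds_zero_nat
        have := Tendsto.sub (tendsto_const_nhds (x := 𝒳 s) (f := atTop (α := ℕ))) h1
        simpa using this
      refine le_of_tendsto (((gcont s).tendsto (𝒳 s)).comp lim) ?_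
      filter_upwards with n
      have hpos : (0 : ℝ) < 1 / ((n : ℝ) + 1) := by positivity
      exact (hmem s _ (sub_lt_self _ hpos)).le
    have hge : 0 ≤ f (𝒳 s, 2 * s - 𝒳 s) := by
      by_contra h
      push_neg at h
      have ho : IsOpen {x : ℝ | f (x, 2 * s - x) < 0} :=
        isOpen_lt (gcont s) continuous_const
      have hnb : {x : ℝ | f (x, 2 * s - x) < 0} ∈ 𝓝 (𝒳 s) := ho.mem_nhds h
      obtain ⟨ε, hε, hball⟩ := Metric.mem_nhds_iff.1 hnb
      have hxmem : 𝒳 s + ε / 2 ∈ {X : ℝ | ∀ X' < X, f (X', 2 * s - X') < 0} := by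
        intro X' hX'
        rcases lt_or_ge X' (𝒳 s) with h1 | h1
        · exact hmem s X' h1
        · have hb : 𝒳 s + ε / 2 ∈ Metric.ball (𝒳 s) ε := by
            refine Metric.mem_ball.2 ?_
            rw [Real.dist_eq, add_sub_cancel_left, abs_of_pos (half_pos hε)]
            linarith
          have := hball hb
          exact lt_of_le_of_lt (gmono s hX'.le) this
      have : 𝒳 s + ε / 2 ≤ 𝒳 s := by
        have h' := le_csSup (hA s).2 hxmem
        rwa [← h𝒳 s] at h'
      linarith
    linarith
  have hmono : Monotone 𝒳 := by
    intro s s' hss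
    rw [h𝒳 s, h𝒳 s']
    refine csSup_le_csSup (hA s').2 (hA s).1 ?_
    intro X hX X' hX'
    calc f (X', 2 * s' - X') ≤ f (X', 2 * s - X') := hmY X' (by linarith)
      _ < 0 := hX X' hX'
  have key : ∀ s' s : ℝ, s' ≤ s → 𝒳 s ≤ 𝒳 s' + 2 * (s - s') := by
    intro s' s hss
    rw [h𝒳 s]
    refine csSup_le (hA s).1 ?_
    intro X hX
    have hmem' : X - 2 * (s - s') ∈ {Z : ℝ | ∀ X' < Z, f (X', 2 * s' - X') < 0} := by
      intro X'' hX''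
      have h1 : X'' + 2 * (s - s') < X := by linarith
      have h2 := hX _ h1
      have h3 : 2 * s - (X'' + 2 * (s - s')) = 2 * s' - X'' := by ring
      rw [h3] at h2
      exact lt_of_le_of_lt (hmX (2 * s' - X'') (by linarith : X'' ≤ X'' + 2 * (s - s'))) h2
    have : X - 2 * (s - s') ≤ 𝒳 s' := by
      rw [h𝒳 s']
      exact le_csSup (hA s').2 hmem'
    linarith
  refine ⟨hzero, hmono, ?_⟩
  intro s s'
  rcases le_total s' s with h | h
  · have h1 := hmono h
    have h2 := key s' s h
    rw [abs_of_nonneg (sub_nonneg.2 h1), abs_of_nonneg (sub_nonneg.2 h)]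
    linarith
  · have h1 := hmono h
    have h2 := key s s' h
    rw [abs_of_nonpos (sub_nonpos.2 h1), abs_of_nonpos (sub_nonpos.2 h)]
    linarith
end

section
/- Inversion identity for the pseudo-inverse. Let μ be a finite nonnegative Borel measure on ℝ and let x₁ be its pseudo-inverse. Then μ((−∞, x₁(X))) + x₁(X) ≤ X for every X ∈ ℝ, and if moreover μ({x₁(X)}) = 0 then μ((−∞, x₁(X))) + x₁(X) = X. -/
/-!
With `F x = x + μ((-∞, x))`, `x₁(X)` is the supremum of the points below which `F < X`.
Since `x ↦ μ((-∞, x))` is left-continuous (continuity of measure along increasing unions),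
`F (x₁ X) ≤ X`. It is right-continuous at `x₁ X` exactly up to the atom `μ({x₁ X})`
(continuity along decreasing intersections), so without an atom `F (x₁ X) < X` would let `F`
stay below `X` a little to the right of `x₁ X`, contradicting maximality.
-/

open MeasureTheory

/-- The pseudo-inverse associated to a finite measure `μ` on `ℝ`:
`x₁ X = sup {x | x' + μ((-∞,x')) < X for all x' < x}`. -/
noncomputable def pseudoInv (μ : Measure ℝ) (X : ℝ) : ℝ :=
  sSup {x : ℝ | ∀ x' < x, x' + (μ (Set.Iio x')).toReal < X}

open Set Filter Topology

noncomputable def generalizedInverse {α β : Type*} [ConditionallyCompleteLinearOrder α] [LT β]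
    (f : α → β) (y : β) : α :=
  sSup {x | ∀ x' < x, f x' < y}

theorem lt_of_lt_generalizedInverse {α β : Type*} [ConditionallyCompleteLinearOrder α] [LT β]
    {f : α → β} {y : β} (hne : {x | ∀ x' < x, f x' < y}.Nonempty) {x : α}
    (hx : x < generalizedInverse f y) : f x < y := by
  obtain ⟨s, hs, hxs⟩ := exists_lt_of_lt_csSup hne hx
  exact hs x hxs

section GeneralizedInverse

variable {α β : Type*} [ConditionallyCompleteLinearOrder α] [TopologicalSpace α] [OrderTopology α]
  [DenselyOrdered α] [LinearOrder β] [TopologicalSpace β] [OrderClosedTopology β]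
  {f : α → β} {y : β}

theorem apply_generalizedInverse_le [NoMinOrder α] (hne : {x | ∀ x' < x, f x' < y}.Nonempty)
    (hf : Tendsto f (𝓝[<] generalizedInverse f y) (𝓝 (f (generalizedInverse f y)))) :
    f (generalizedInverse f y) ≤ y :=
  le_of_tendsto hf (eventually_nhdsWithin_of_forall fun _ hx ↦
    (lt_of_lt_generalizedInverse hne hx).le)

theorem le_apply_generalizedInverse [NoMaxOrder α] (hmono : Monotone f)
    (hbdd : BddAbove {x | ∀ x' < x, f x' < y})
    (hf : Tendsto f (𝓝[>] generalizedInverse f y) (𝓝 (f (generalizedInverse f y)))) :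
    y ≤ f (generalizedInverse f y) := by
  by_contra! hlt
  obtain ⟨x, hxy, hgx⟩ := ((hf.eventually_lt_const hlt).and self_mem_nhdsWithin).exists
  have hx : x ∈ {x | ∀ x' < x, f x' < y} := fun x' hx' ↦ (hmono hx'.le).trans_lt hxy
  exact (le_csSup hbdd hx).not_gt hgx

end GeneralizedInverse

section MeasureIio

variable {α : Type*} [MeasurableSpace α] [LinearOrder α] [TopologicalSpace α] [OrderTopology α]
  [FirstCountableTopology α]

theorem tendsto_measure_Iio_nhdsLT [DenselyOrdered α] (μ : Measure α) (a : α) :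
    Tendsto (fun x ↦ μ (Iio x)) (𝓝[<] a) (𝓝 (μ (Iio a))) := by
  have : (atTop : Filter (Iio a)).IsCountablyGenerated := by
    rw [← comap_coe_Iio_nhdsLT a]
    infer_instance
  rw [← map_coe_Iio_atTop a, tendsto_map'_iff]
  have hunion : ⋃ x : Iio a, Iio (x : α) = Iio a :=
    IsLUB.iUnion_Iio_eq (by rw [Subtype.range_coe]; exact isLUB_Iio)
  have := tendsto_measure_iUnion_atTop (μ := μ) (s := fun x : Iio a ↦ Iio (x : α))
    fun _ _ hxy ↦ Iio_subset_Iio hxy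
  rwa [hunion] at this

theorem tendsto_measure_Iio_nhdsGT [OpensMeasurableSpace α] [NoMaxOrder α] (μ : Measure α)
    [IsFiniteMeasure μ] (a : α) :
    Tendsto (fun x ↦ μ (Iio x)) (𝓝[>] a) (𝓝 (μ (Iic a))) := by
  have hinter : ⋂ r > a, Iio r = Iic a := by
    ext x
    simp only [mem_iInter, mem_Iio, mem_Iic]
    exact ⟨fun h ↦ le_of_forall_gt h, fun h r hr ↦ h.trans_lt hr⟩
  rw [← hinter]
  exact tendsto_measure_biInter_gt (a := a)
    (fun _ _ ↦ measurableSet_Iio.nullMeasurableSet) (fun _ _ _ hij ↦ Iio_subset_Iio hij)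
    ((exists_gt a).imp fun _ hr ↦ ⟨hr, measure_ne_top μ _⟩)

end MeasureIio

theorem pseudoInv_eq_generalizedInverse (μ : Measure ℝ) :
    pseudoInv μ = generalizedInverse fun x ↦ x + (μ (Iio x)).toReal := rfl

/-- Inversion identity for the pseudo-inverse:
`μ((-∞, x₁ X)) + x₁ X ≤ X`, with equality if `μ({x₁ X}) = 0`. -/
theorem pseudoInv_inversion (μ : Measure ℝ) [IsFiniteMeasure μ] (X : ℝ) :
    (μ (Set.Iio (pseudoInv μ X))).toReal + pseudoInv μ X ≤ X ∧
    (μ {pseudoInv μ X} = 0 →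
      (μ (Set.Iio (pseudoInv μ X))).toReal + pseudoInv μ X = X) := by
  set F : ℝ → ℝ := fun x ↦ x + (μ (Iio x)).toReal
  have hmono : Monotone F := fun x y hxy ↦ add_le_add hxy
    (ENNReal.toReal_mono (measure_ne_top μ _) (measure_mono (Iio_subset_Iio hxy)))
  have hne : {x | ∀ x' < x, F x' < X}.Nonempty := by
    refine ⟨X - (μ univ).toReal, fun x' hx' ↦ ?_⟩
    have := ENNReal.toReal_mono (measure_ne_top μ _) (measure_mono (subset_univ (Iio x')))
    simp only [F]
    linarith
  have hbdd : BddAbove {x | ∀ x' < x, F x' < X} := ⟨X, fun x hx ↦ le_of_forall_lt fun x' hx' ↦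
    (le_add_of_nonneg_right ENNReal.toReal_nonneg).trans_lt (hx x' hx')⟩
  have hleft (x : ℝ) : Tendsto F (𝓝[<] x) (𝓝 (F x)) :=
    continuousWithinAt_id.tendsto.add
      ((ENNReal.tendsto_toReal (measure_ne_top μ _)).comp (tendsto_measure_Iio_nhdsLT μ x))
  have hright (x : ℝ) (hx : μ {x} = 0) : Tendsto F (𝓝[>] x) (𝓝 (F x)) := by
    have hIio := tendsto_measure_Iio_nhdsGT μ x
    rw [← measure_congr (Iio_ae_eq_Iic' hx)] at hIio
    exact continuousWithinAt_id.tendsto.add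
      ((ENNReal.tendsto_toReal (measure_ne_top μ _)).comp hIio)
  rw [add_comm, pseudoInv_eq_generalizedInverse]
  exact ⟨apply_generalizedInverse_le hne (hleft _), fun h0 ↦ le_antisymm
    (apply_generalizedInverse_le hne (hleft _))
    (le_apply_generalizedInverse hmono hbdd (hright _ h0))⟩
end

section
/- Recovering the measure from its pseudo-inverse. Let μ be a finite nonnegative Borel measure on ℝ, let x₁ be its pseudo-inverse, and define g : ℝ → ℝ by g(x) = sup{ X ∈ ℝ : x₁(X) < x }. Then g(x) = x + μ((−∞, x)) for every x ∈ ℝ. -/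
open MeasureTheory

private lemma F_strictMono (μ : Measure ℝ) [IsFiniteMeasure μ] :
    StrictMono (fun x : ℝ => x + (μ (Set.Iio x)).toReal) := by
  intro a b hab
  have h1 : (μ (Set.Iio a)).toReal ≤ (μ (Set.Iio b)).toReal :=
    ENNReal.toReal_mono (measure_ne_top μ _) (measure_mono (Set.Iio_subset_Iio hab.le))
  dsimp only
  linarith

private lemma F_left_cont (μ : Measure ℝ) [IsFiniteMeasure μ] (x X : ℝ)
    (hX : X < x + (μ (Set.Iio x)).toReal) :
    ∃ y < x, X < y + (μ (Set.Iio y)).toReal := by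
  set y : ℕ → ℝ := fun n => x - 1 / (n + 1) with hy
  have hyx : ∀ n, y n < x := by
    intro n
    have : (0 : ℝ) < 1 / (n + 1) := by positivity
    simp only [hy]; linarith
  have hmono : Monotone fun n => Set.Iio (y n) := by
    intro m n hmn
    apply Set.Iio_subset_Iio
    have : (m : ℝ) + 1 ≤ n + 1 := by exact_mod_cast Nat.succ_le_succ hmn
    have h1 : 1 / ((n : ℝ) + 1) ≤ 1 / (m + 1) := by
      apply one_div_le_one_div_of_le (by positivity) this
    simp only [hy]; linarith
  have hunion : ⋃ n, Set.Iio (y n) = Set.Iio x := by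
    ext z
    simp only [Set.mem_iUnion, Set.mem_Iio]
    constructor
    · rintro ⟨n, hn⟩; exact hn.trans (hyx n)
    · intro hz
      obtain ⟨n, hn⟩ := exists_nat_one_div_lt (show 0 < x - z by linarith)
      exact ⟨n, by simp only [hy]; linarith⟩
  have hmeas : Filter.Tendsto (fun n => μ (Set.Iio (y n))) Filter.atTop
      (nhds (μ (Set.Iio x))) := by
    rw [← hunion]
    exact tendsto_measure_iUnion_atTop hmono
  have htoReal : Filter.Tendsto (fun n => (μ (Set.Iio (y n))).toReal) Filter.atTop
      (nhds ((μ (Set.Iio x)).toReal)) :=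
    (ENNReal.tendsto_toReal (measure_ne_top μ _)).comp hmeas
  have hyn : Filter.Tendsto y Filter.atTop (nhds x) := by
    have : Filter.Tendsto (fun n : ℕ => 1 / ((n : ℝ) + 1)) Filter.atTop (nhds 0) :=
      tendsto_one_div_add_atTop_nhds_zero_nat
    have := Filter.Tendsto.sub (tendsto_const_nhds (x := x)) this
    simpa [hy] using this
  have hF : Filter.Tendsto (fun n => y n + (μ (Set.Iio (y n))).toReal) Filter.atTop
      (nhds (x + (μ (Set.Iio x)).toReal)) := hyn.add htoReal
  have : ∀ᶠ n in Filter.atTop, X < y n + (μ (Set.Iio (y n))).toReal :=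
    hF.eventually (eventually_gt_nhds hX)
  obtain ⟨n, hn⟩ := this.exists
  exact ⟨y n, hyx n, hn⟩

private lemma pseudoInv_lt (μ : Measure ℝ) [IsFiniteMeasure μ] {x X : ℝ}
    (hX : X < x + (μ (Set.Iio x)).toReal) : pseudoInv μ X < x := by
  obtain ⟨y, hyx, hXy⟩ := F_left_cont μ x X hX
  have hne : {x : ℝ | ∀ x' < x, x' + (μ (Set.Iio x')).toReal < X}.Nonempty := by
    refine ⟨X - (μ Set.univ).toReal, fun x' hx' => ?_⟩
    have : (μ (Set.Iio x')).toReal ≤ (μ Set.univ).toReal :=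
      ENNReal.toReal_mono (measure_ne_top μ _) (measure_mono (Set.subset_univ _))
    linarith
  have hle : pseudoInv μ X ≤ y := by
    apply csSup_le hne
    intro a ha
    by_contra hya
    push_neg at hya
    exact absurd (ha y hya) (not_lt.mpr hXy.le)
  exact lt_of_le_of_lt hle hyx

private lemma le_pseudoInv (μ : Measure ℝ) [IsFiniteMeasure μ] {x X : ℝ}
    (hX : x + (μ (Set.Iio x)).toReal ≤ X) : x ≤ pseudoInv μ X := by
  apply le_csSup
  · refine ⟨X, fun a ha => ?_⟩
    by_contra hXa
    push_neg at hXa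
    have := ha X hXa
    have hXX : X ≤ X + (μ (Set.Iio X)).toReal := le_add_of_nonneg_right ENNReal.toReal_nonneg
    linarith
  · intro x' hx'
    exact lt_of_lt_of_le (F_strictMono μ hx') hX

/-- Recovering the measure from its pseudo-inverse: if
`g x = sup {X | x₁ X < x}`, then `g x = x + μ((-∞, x))` for every `x`. -/
theorem pseudoInv_recover (μ : Measure ℝ) [IsFiniteMeasure μ]
    (g : ℝ → ℝ) (hg : ∀ x : ℝ, g x = sSup {X : ℝ | pseudoInv μ X < x}) :
    ∀ x : ℝ, g x = x + (μ (Set.Iio x)).toReal := by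
  intro x
  rw [hg x]
  have hset : {X : ℝ | pseudoInv μ X < x} = Set.Iio (x + (μ (Set.Iio x)).toReal) := by
    ext X
    simp only [Set.mem_setOf_eq, Set.mem_Iio]
    constructor
    · intro h
      by_contra hX
      push_neg at hX
      exact absurd (le_pseudoInv μ hX) (not_le.mpr h)
    · intro h
      exact pseudoInv_lt μ h
  rw [hset, csSup_Iio]
end

section
/- Right inverse identities for the pseudo-inverse. Let μ be a finite nonnegative Borel measure on ℝ and let x₁ be its pseudo-inverse. Then for every x ∈ ℝ, x₁( x + μ((−∞, x)) ) = x and x₁( x + μ((−∞, x]) ) = x. -/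
open MeasureTheory

/-- Right inverse identities:
`x₁ (x + μ((-∞,x))) = x` and `x₁ (x + μ((-∞,x])) = x` for every `x`. -/
theorem pseudoInv_right_inverse (μ : Measure ℝ) [IsFiniteMeasure μ] (x : ℝ) :
    pseudoInv μ (x + (μ (Set.Iio x)).toReal) = x ∧
    pseudoInv μ (x + (μ (Set.Iic x)).toReal) = x := by
  have hfin : ∀ s : Set ℝ, μ s ≠ ⊤ := fun s => measure_ne_top μ s
  have h1 : {y : ℝ | ∀ x' < y, x' + (μ (Set.Iio x')).toReal < x + (μ (Set.Iio x)).toReal}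
      = Set.Iic x := by
    ext y
    constructor
    · intro h
      by_contra hy
      rw [Set.mem_Iic, not_le] at hy
      have := h x hy
      linarith
    · intro hy x' hx'
      have hx'x : x' < x := lt_of_lt_of_le hx' hy
      have hle : (μ (Set.Iio x')).toReal ≤ (μ (Set.Iio x)).toReal := by
        apply ENNReal.toReal_mono (hfin _)
        exact measure_mono (Set.Iio_subset_Iio hx'x.le)
      linarith
  have h2 : {y : ℝ | ∀ x' < y, x' + (μ (Set.Iio x')).toReal < x + (μ (Set.Iic x)).toReal}
      = Set.Iic x := by
    ext y
    constructor
    · intro h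
      by_contra hy
      rw [Set.mem_Iic, not_le] at hy
      obtain ⟨z, hxz, hzy⟩ := exists_between hy
      have hz := h z hzy
      have hle : (μ (Set.Iic x)).toReal ≤ (μ (Set.Iio z)).toReal := by
        apply ENNReal.toReal_mono (hfin _)
        exact measure_mono (fun a ha => lt_of_le_of_lt ha hxz)
      linarith
    · intro hy x' hx'
      have hx'x : x' < x := lt_of_lt_of_le hx' hy
      have hle : (μ (Set.Iio x')).toReal ≤ (μ (Set.Iic x)).toReal := by
        apply ENNReal.toReal_mono (hfin _)
        exact measure_mono (fun a ha => le_trans (le_of_lt ha) hx'x.le)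
      linarith
  constructor <;> simp only [pseudoInv]
  · rw [h1]; exact csSup_Iic
  · rw [h2]; exact csSup_Iic
end

section
/- Almost-everywhere derivative of the pseudo-inverse. Let μ be a finite nonnegative Borel measure on ℝ, let x₁ be its pseudo-inverse, and let f : ℝ → [0,∞) be any representative of the Radon–Nikodym derivative of μ with respect to Lebesgue measure. Then for Lebesgue-almost every X ∈ ℝ, x₁ is differentiable at X and either x₁'(X) = 0 or x₁'(X)·(1 + f(x₁(X))) = 1; in particular 0 ≤ x₁'(X) ≤ 1 for almost every X. -/
open MeasureTheory

/-!
The pseudo-inverse `x₁` is a generalized inverse of the Stieltjes function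
`G x = x + μ (-∞, x]`: `G t < X` for `t < x₁ X` and `X ≤ G t` for `t > x₁ X`. By Lebesgue's
differentiation theorem `G' = 1 + f` a.e. Wherever `G` is differentiable at `x₁ X`, the bracket
`G (x₁ X -) ≤ X ≤ G (x₁ X)` forces `x₁'(X) = 1 / (1 + f (x₁ X))`. The remaining `X` are mapped
by `x₁` into a null set, and since the monotone `x₁` is injective where `x₁' ≠ 0`, the area formula
shows that `x₁' = 0` a.e. on them.
-/

open Set Filter Topology Asymptotics

theorem abs_sub_le_of_forall_lt_le_of_forall_gt_le {F h k : ℝ → ℝ} {x y : ℝ}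
    (hlt : ∀ t < x, F t ≤ y) (hgt : ∀ t > x, y ≤ F t)
    (hF : ∀ᶠ t in 𝓝 x, |F t - h t| ≤ k t) (hh : ContinuousAt h x) (hk : ContinuousAt k x) :
    |y - h x| ≤ k x := by
  rw [abs_sub_le_iff]
  constructor
  · have hy : y ≤ h x + k x := by
      refine ge_of_tendsto (x := 𝓝[>] x)
        ((hh.tendsto.add hk.tendsto).mono_left nhdsWithin_le_nhds) ?_
      filter_upwards [self_mem_nhdsWithin, nhdsWithin_le_nhds hF] with t ht hFt
      linarith [hgt t ht, (abs_le.1 hFt).2]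
    linarith
  · have hy : h x - k x ≤ y := by
      refine le_of_tendsto (x := 𝓝[<] x)
        ((hh.tendsto.sub hk.tendsto).mono_left nhdsWithin_le_nhds) ?_
      filter_upwards [self_mem_nhdsWithin, nhdsWithin_le_nhds hF] with t ht hFt
      linarith [hlt t ht, (abs_le.1 hFt).1]
    linarith

theorem HasDerivAt.of_generalizedInverse {F g : ℝ → ℝ} {a c : ℝ}
    (hF : HasDerivAt F c (g a)) (hc : c ≠ 0) (hg : ContinuousAt g a)
    (hlt : ∀ y, ∀ t < g y, F t ≤ y) (hgt : ∀ y, ∀ t > g y, y ≤ F t) :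
    HasDerivAt g c⁻¹ a := by
  have hFa : F (g a) = a := by
    have := abs_sub_le_of_forall_lt_le_of_forall_gt_le (hlt a) (hgt a) (h := F) (k := 0)
      (by simp) hF.continuousAt continuousAt_const
    rw [Pi.zero_apply, abs_nonpos_iff, sub_eq_zero] at this
    exact this.symm
  have hsmall : (fun y => y - a - c * (g y - g a)) =o[𝓝 a] fun y => c * (g y - g a) := by
    refine isLittleO_iff.2 fun ε hε => ?_
    have hFε := (hasDerivAt_iff_isLittleO.1 hF).def (mul_pos hε (abs_pos.2 hc))
    filter_upwards [hg.eventually (eventually_eventually_nhds.2 hFε)] with y hy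
    have := abs_sub_le_of_forall_lt_le_of_forall_gt_le (hlt y) (hgt y)
      (h := fun t => a + c * (t - g a)) (k := fun t => ε * |c| * |t - g a|)
      (hy.mono fun t ht => by simpa [hFa, mul_comm, sub_sub] using ht) (by fun_prop) (by fun_prop)
    simpa [Real.norm_eq_abs, abs_mul, sub_sub, mul_assoc] using this
  have hbig : (fun y => c * (g y - g a)) =O[𝓝 a] fun y => y - a :=
    hsmall.right_isBigO_add'.congr_right fun y => by simp only [Pi.add_apply]; ring
  rw [hasDerivAt_iff_isLittleO]
  refine ((hsmall.trans_isBigO hbig).const_mul_left (-c⁻¹)).congr_left fun y => ?_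
  simp only [smul_eq_mul]
  field_simp
  ring

theorem Monotone.strictMonoOn_deriv_ne_zero {f : ℝ → ℝ} (hf : Monotone f) :
    StrictMonoOn f {x | deriv f x ≠ 0} := by
  intro x hx y _ hxy
  refine (hf hxy.le).lt_of_ne fun hfxy => hx ?_
  have hconst : f =ᶠ[𝓝[>] x] fun _ => f x := by
    filter_upwards [Ioo_mem_nhdsGT hxy] with t ht
    exact le_antisymm (hfxy ▸ hf ht.2.le) (hf ht.1.le)
  exact (uniqueDiffWithinAt_Ioi x).eq_deriv _
    (differentiableAt_of_deriv_ne_zero hx).hasDerivAt.hasDerivWithinAt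
    ((hasDerivWithinAt_const x _ (f x)).congr_of_eventuallyEq hconst rfl)

theorem Monotone.ae_comp_or_deriv_eq_zero {f : ℝ → ℝ} (hf : Monotone f) {p : ℝ → Prop}
    (hp : ∀ᵐ y, p y) : ∀ᵐ x, p (f x) ∨ deriv f x = 0 := by
  set N := toMeasurable volume {y | ¬ p y}
  set s := f ⁻¹' N ∩ {x | deriv f x ≠ 0}
  have hs : MeasurableSet s :=
    (hf.measurable (measurableSet_toMeasurable _ _)).inter
      ((measurable_deriv f) (measurableSet_singleton 0)).compl
  have himage : volume (f '' s) = 0 :=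
    measure_mono_null (image_subset_iff.2 inter_subset_left)
      ((measure_toMeasurable _).trans (ae_iff.1 hp))
  have hint : ∫⁻ x in s, ENNReal.ofReal |deriv f x| = 0 := by
    have := lintegral_abs_det_fderiv_eq_addHaar_image volume hs
      (fun x hx =>
        (differentiableAt_of_deriv_ne_zero hx.2).hasDerivAt.hasDerivWithinAt.hasFDerivWithinAt)
      (hf.strictMonoOn_deriv_ne_zero.mono inter_subset_right).injOn
    simpa [himage] using this
  filter_upwards [(setLIntegral_eq_zero_iff hs (measurable_deriv f).abs.ennreal_ofReal).1 hint]
    with x hx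
  by_contra! h
  simpa [h.2] using hx ⟨subset_toMeasurable _ _ h.1, h.2⟩

namespace MeasureTheory.Measure

variable (μ : Measure ℝ) [IsFiniteMeasure μ]

noncomputable def stieltjesFunction : StieltjesFunction ℝ where
  toFun x := μ.real (Iic x)
  mono' _ _ h := measureReal_mono (Iic_subset_Iic.2 h)
  right_continuous' x := by
    have h := tendsto_measure_biInter_gt (μ := μ) (s := Iic) (a := x)
      (fun _ _ => measurableSet_Iic.nullMeasurableSet) (fun _ _ _ hij => Iic_subset_Iic.2 hij)
      ⟨x + 1, by linarith, measure_ne_top μ _⟩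
    have hIic : ⋂ r > x, Iic r = Iic x := by
      ext y
      simpa using forall_gt_imp_ge_iff_le_of_dense
    rw [hIic] at h
    exact continuousWithinAt_Ioi_iff_Ici.1 ((ENNReal.tendsto_toReal (measure_ne_top μ _)).comp h)

theorem stieltjesFunction_apply (x : ℝ) : μ.stieltjesFunction x = μ.real (Iic x) := rfl

theorem measure_stieltjesFunction : μ.stieltjesFunction.measure = μ := by
  refine ext_of_Ioc _ _ fun a b hab => ?_
  rw [StieltjesFunction.measure_Ioc, stieltjesFunction_apply, stieltjesFunction_apply,
    ← Iic_union_Ioc_eq_Iic hab.le, measureReal_union (Iic_disjoint_Ioc le_rfl) measurableSet_Ioc,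
    add_sub_cancel_left, ofReal_measureReal (measure_ne_top μ _)]

theorem ae_hasDerivAt_add_measureReal_Iic :
    ∀ᵐ x, HasDerivAt (fun y => y + μ.real (Iic y)) (1 + (μ.rnDeriv volume x).toReal) x := by
  have hmeas : (StieltjesFunction.id + μ.stieltjesFunction).measure = volume + μ := by
    rw [StieltjesFunction.measure_add, measure_stieltjesFunction, ← Real.volume_eq_stieltjes_id]
  filter_upwards [(StieltjesFunction.id + μ.stieltjesFunction).ae_hasDerivAt,
    rnDeriv_add' volume μ volume, rnDeriv_self volume, rnDeriv_lt_top μ volume]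
    with x hx hadd hself hfin
  rw [hmeas, hadd, Pi.add_apply, hself,
    ENNReal.toReal_add ENNReal.one_ne_top hfin.ne, ENNReal.toReal_one] at hx
  exact hx

end MeasureTheory.Measure

section PseudoInverse

theorem bddAbove_pseudoInv_set (μ : Measure ℝ) (X : ℝ) :
    BddAbove {x : ℝ | ∀ x' < x, x' + μ.real (Iio x') < X} :=
  ⟨X, fun x hx => le_of_forall_lt fun x' hx' => by
    linarith [hx x' hx', measureReal_nonneg (μ := μ) (s := Iio x')]⟩

variable (μ : Measure ℝ) [IsFiniteMeasure μ]

theorem nonempty_pseudoInv_set (X : ℝ) :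
    {x : ℝ | ∀ x' < x, x' + μ.real (Iio x') < X}.Nonempty :=
  ⟨X - μ.real univ, fun x' hx' => by
    linarith [measureReal_mono (μ := μ) (subset_univ (Iio x'))]⟩

variable {μ}

theorem add_measureReal_Iic_lt_of_lt_pseudoInv {x X : ℝ} (h : x < pseudoInv μ X) :
    x + μ.real (Iic x) < X := by
  obtain ⟨z, hz, hxz⟩ := exists_lt_of_lt_csSup (nonempty_pseudoInv_set μ X) h
  obtain ⟨x', hxx', hx'z⟩ := exists_between hxz
  linarith [hz x' hx'z, measureReal_mono (μ := μ) (Iic_subset_Iio.2 hxx')]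

theorem le_add_measureReal_Iic_of_pseudoInv_lt {x X : ℝ} (h : pseudoInv μ X < x) :
    X ≤ x + μ.real (Iic x) := by
  have hx : x ∉ {x : ℝ | ∀ x' < x, x' + μ.real (Iio x') < X} :=
    fun hx => (le_csSup (bddAbove_pseudoInv_set μ X) hx).not_gt h
  simp only [mem_ofPred_eq, not_forall, not_lt] at hx
  obtain ⟨x', hx'x, hXx'⟩ := hx
  linarith [measureReal_mono (μ := μ) (Iio_subset_Iic hx'x.le)]

variable (μ)

theorem monotone_pseudoInv : Monotone (pseudoInv μ) := by
  intro X Y hXY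
  by_contra! h
  obtain ⟨t, hYt, htX⟩ := exists_between h
  linarith [add_measureReal_Iic_lt_of_lt_pseudoInv htX, le_add_measureReal_Iic_of_pseudoInv_lt hYt]

theorem lipschitzWith_one_pseudoInv : LipschitzWith 1 (pseudoInv μ) := by
  refine LipschitzWith.of_le_add_mul 1 fun X Y => ?_
  by_contra! h
  rw [NNReal.coe_one, one_mul] at h
  obtain ⟨t, hYt, htX⟩ := exists_between (lt_sub_iff_add_lt.2 h)
  have hX := add_measureReal_Iic_lt_of_lt_pseudoInv (lt_sub_iff_add_lt.1 htX)
  have hY := le_add_measureReal_Iic_of_pseudoInv_lt hYt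
  have hmono : μ.real (Iic t) ≤ μ.real (Iic (t + dist X Y)) :=
    measureReal_mono (Iic_subset_Iic.2 (le_add_of_nonneg_right dist_nonneg))
  linarith [le_abs_self (X - Y), Real.dist_eq X Y]

end PseudoInverse

/-- Almost-everywhere derivative of the pseudo-inverse: if `f ≥ 0`
is a representative of the Radon–Nikodym derivative of `μ` with respect to Lebesgue
measure, then for a.e. `X` the pseudo-inverse `x₁` is differentiable at `X` and either
`x₁'(X) = 0` or `x₁'(X) · (1 + f (x₁ X)) = 1`; in particular `0 ≤ x₁'(X) ≤ 1` a.e. -/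
theorem pseudoInv_ae_deriv (μ : Measure ℝ) [IsFiniteMeasure μ]
    (f : ℝ → ℝ) (hf0 : ∀ x : ℝ, 0 ≤ f x)
    (hf : (fun x => ENNReal.ofReal (f x)) =ᵐ[volume] μ.rnDeriv volume) :
    ∀ᵐ X ∂(volume : Measure ℝ), DifferentiableAt ℝ (pseudoInv μ) X ∧
      (deriv (pseudoInv μ) X = 0 ∨
        deriv (pseudoInv μ) X * (1 + f (pseudoInv μ X)) = 1) ∧
      0 ≤ deriv (pseudoInv μ) X ∧ deriv (pseudoInv μ) X ≤ 1 := by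
  have hG : ∀ᵐ x, HasDerivAt (fun y => y + μ.real (Iic y)) (1 + f x) x := by
    filter_upwards [μ.ae_hasDerivAt_add_measureReal_Iic, hf] with x hx hfx
    rwa [← hfx, ENNReal.toReal_ofReal (hf0 x)] at hx
  filter_upwards [(lipschitzWith_one_pseudoInv μ).ae_differentiableAt,
    (monotone_pseudoInv μ).ae_comp_or_deriv_eq_zero hG] with X hdiff hX
  rcases hX with hGX | hzero
  · have hpos : 1 ≤ 1 + f (pseudoInv μ X) := le_add_of_nonneg_right (hf0 _)
    have hderiv := (hGX.of_generalizedInverse (by positivity)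
      (lipschitzWith_one_pseudoInv μ).continuous.continuousAt
      (fun _ _ ht => (add_measureReal_Iic_lt_of_lt_pseudoInv ht).le)
      (fun _ _ ht => le_add_measureReal_Iic_of_pseudoInv_lt ht)).deriv
    rw [hderiv]
    exact ⟨hdiff, Or.inr (inv_mul_cancel₀ (by positivity)), by positivity,
      inv_le_one_of_one_le₀ hpos⟩
  · rw [hzero]
    exact ⟨hdiff, Or.inl rfl, le_rfl, zero_le_one⟩
end

section
/- Pseudo-inverse of a truncated measure. Let μ be a finite nonnegative Borel measure on ℝ, let x_l ≤ x_r be real numbers, and let μ̄ be the restricted measure μ̄(E) = μ(E ∩ [x_l, x_r]). Let x₁ and x̄₁ be the pseudo-inverses of μ and μ̄ respectively. Then: x̄₁(X) = X for X ≤ x_l; x̄₁(X) = x₁(X + μ((−∞, x_l))) for x_l < X ≤ x_r + μ([x_l, x_r]); and x̄₁(X) = X − μ([x_l, x_r]) for X > x_r + μ([x_l, x_r]). -/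
open MeasureTheory

lemma pseudoInv_eq (μ : Measure ℝ) [IsFiniteMeasure μ] (X : ℝ) :
    pseudoInv μ X = sSup {x : ℝ | x + (μ (Set.Iio x)).toReal < X} := by
  set T := {x : ℝ | x + (μ (Set.Iio x)).toReal < X} with hT
  set S := {x : ℝ | ∀ x' < x, x' + (μ (Set.Iio x')).toReal < X} with hS
  have hTS : T ⊆ S := by
    intro x hx x' hx'
    have hmono : (μ (Set.Iio x')).toReal ≤ (μ (Set.Iio x)).toReal :=
      ENNReal.toReal_mono (measure_ne_top μ _) (measure_mono (Set.Iio_subset_Iio hx'.le))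
    have hx'' : x + (μ (Set.Iio x)).toReal < X := hx
    linarith
  have hTne : T.Nonempty := by
    refine ⟨X - (μ Set.univ).toReal - 1, ?_⟩
    have h1 : (μ (Set.Iio (X - (μ Set.univ).toReal - 1))).toReal ≤ (μ Set.univ).toReal :=
      ENNReal.toReal_mono (measure_ne_top μ _) (measure_mono (Set.subset_univ _))
    simp only [hT, Set.mem_setOf_eq]
    linarith
  have hSbdd : BddAbove S := by
    refine ⟨X, fun x hx => ?_⟩
    by_contra h
    push_neg at h
    obtain ⟨y, hy1, hy2⟩ := exists_between h
    have h3 := hx y hy2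
    have h4 : (0:ℝ) ≤ (μ (Set.Iio y)).toReal := ENNReal.toReal_nonneg
    linarith
  have hTbdd : BddAbove T := hSbdd.mono hTS
  refine le_antisymm ?_ (csSup_le_csSup hSbdd hTne hTS)
  refine csSup_le (hTne.mono hTS) fun x hx => ?_
  by_contra h
  push_neg at h
  obtain ⟨y, hy1, hy2⟩ := exists_between h
  have hyT : y ∈ T := hx y hy2
  exact absurd (le_csSup hTbdd hyT) (not_le.mpr hy1)

/-- Pseudo-inverse of a truncated measure: for `x_l ≤ x_r` and
`μ̄ = μ restricted to [x_l, x_r]`, the pseudo-inverse `x̄₁` of `μ̄` satisfies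
`x̄₁ X = X` for `X ≤ x_l`, `x̄₁ X = x₁ (X + μ((-∞,x_l)))` for
`x_l < X ≤ x_r + μ([x_l,x_r])`, and `x̄₁ X = X - μ([x_l,x_r])` for
`X > x_r + μ([x_l,x_r])`. -/
theorem pseudoInv_truncated (μ : Measure ℝ) [IsFiniteMeasure μ]
    (xl xr : ℝ) (hlr : xl ≤ xr) :
    (∀ X : ℝ, X ≤ xl → pseudoInv (μ.restrict (Set.Icc xl xr)) X = X) ∧
    (∀ X : ℝ, xl < X → X ≤ xr + (μ (Set.Icc xl xr)).toReal →
      pseudoInv (μ.restrict (Set.Icc xl xr)) X =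
        pseudoInv μ (X + (μ (Set.Iio xl)).toReal)) ∧
    (∀ X : ℝ, xr + (μ (Set.Icc xl xr)).toReal < X →
      pseudoInv (μ.restrict (Set.Icc xl xr)) X = X - (μ (Set.Icc xl xr)).toReal) := by
  set m := (μ (Set.Icc xl xr)).toReal with hm
  set c := (μ (Set.Iio xl)).toReal with hc
  have hm0 : 0 ≤ m := ENNReal.toReal_nonneg
  have hres : ∀ x : ℝ, μ.restrict (Set.Icc xl xr) (Set.Iio x)
      = μ (Set.Iio x ∩ Set.Icc xl xr) := fun x =>
    Measure.restrict_apply measurableSet_Iio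
  -- measure of restricted Iio is at most m
  have hle_m : ∀ x : ℝ, (μ.restrict (Set.Icc xl xr) (Set.Iio x)).toReal ≤ m := by
    intro x
    rw [hres]
    exact ENNReal.toReal_mono (measure_ne_top μ _) (measure_mono Set.inter_subset_right)
  refine ⟨?_, ?_, ?_⟩
  · -- Case X ≤ xl
    intro X hX
    rw [pseudoInv_eq]
    have hset : {x : ℝ | x + (μ.restrict (Set.Icc xl xr) (Set.Iio x)).toReal < X}
        = Set.Iio X := by
      ext x
      simp only [Set.mem_setOf_eq, Set.mem_Iio]
      constructor
      · intro hx
        have : (0:ℝ) ≤ (μ.restrict (Set.Icc xl xr) (Set.Iio x)).toReal :=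
          ENNReal.toReal_nonneg
        linarith
      · intro hx
        have hempty : Set.Iio x ∩ Set.Icc xl xr = ∅ := by
          ext y
          simp only [Set.mem_inter_iff, Set.mem_Iio, Set.mem_Icc, Set.mem_empty_iff_false,
            iff_false, not_and, and_imp]
          intro hyx hyl _
          linarith
        rw [hres, hempty]
        simp [hx]
    rw [hset, csSup_Iio]
  · -- Case xl < X ≤ xr + m
    intro X hXl hXr
    rw [pseudoInv_eq, pseudoInv_eq]
    congr 1
    ext x
    simp only [Set.mem_setOf_eq]
    rw [hres x]
    rcases le_or_gt x xl with hx | hx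
    · -- x ≤ xl : both conditions true
      have hempty : Set.Iio x ∩ Set.Icc xl xr = ∅ := by
        ext y
        simp only [Set.mem_inter_iff, Set.mem_Iio, Set.mem_Icc, Set.mem_empty_iff_false,
          iff_false, not_and, and_imp]
        intro hyx hyl _
        linarith
      have h1 : x + (μ (Set.Iio x ∩ Set.Icc xl xr)).toReal < X := by
        rw [hempty]
        simpa using lt_of_le_of_lt hx hXl
      have h2 : x + (μ (Set.Iio x)).toReal < X + c := by
        have : (μ (Set.Iio x)).toReal ≤ c :=
          ENNReal.toReal_mono (measure_ne_top μ _) (measure_mono (Set.Iio_subset_Iio hx))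
        linarith
      simp [h1, h2]
    rcases le_or_gt x xr with hxr | hxr
    · -- xl < x ≤ xr : conditions equivalent
      have hIco : Set.Iio x ∩ Set.Icc xl xr = Set.Ico xl x := by
        ext y
        simp only [Set.mem_inter_iff, Set.mem_Iio, Set.mem_Icc, Set.mem_Ico]
        constructor
        · rintro ⟨h1, h2, _⟩; exact ⟨h2, h1⟩
        · rintro ⟨h1, h2⟩; exact ⟨h2, h1, le_trans h2.le hxr⟩
      have hdisj : Disjoint (Set.Iio xl) (Set.Ico xl x) := by
        rw [Set.disjoint_left]
        intro y hy hy2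
        exact absurd hy2.1 (not_le.mpr hy)
      have hsplit : μ (Set.Iio x) = μ (Set.Iio xl) + μ (Set.Ico xl x) := by
        rw [← measure_union hdisj measurableSet_Ico, Set.Iio_union_Ico_eq_Iio hx.le]
      have hsplit' : (μ (Set.Iio x)).toReal = c + (μ (Set.Ico xl x)).toReal := by
        rw [hsplit, ENNReal.toReal_add (measure_ne_top μ _) (measure_ne_top μ _)]
      rw [hIco]
      constructor
      · intro h; linarith
      · intro h; linarith
    · -- x > xr : both conditions false
      have hIcc : Set.Iio x ∩ Set.Icc xl xr = Set.Icc xl xr := by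
        apply Set.inter_eq_right.mpr
        intro y hy
        exact lt_of_le_of_lt hy.2 hxr
      have h1 : ¬ (x + (μ (Set.Iio x ∩ Set.Icc xl xr)).toReal < X) := by
        rw [hIcc]
        push_neg
        linarith
      have h2 : ¬ (x + (μ (Set.Iio x)).toReal < X + c) := by
        push_neg
        have hsub : Set.Iio xl ∪ Set.Icc xl xr ⊆ Set.Iio x := by
          intro y hy
          rcases hy with hy | hy
          · exact lt_of_lt_of_le hy (le_trans hlr hxr.le)
          · exact lt_of_le_of_lt hy.2 hxr
        have hdisj : Disjoint (Set.Iio xl) (Set.Icc xl xr) := by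
          rw [Set.disjoint_left]
          intro y hy hy2
          exact absurd hy2.1 (not_le.mpr hy)
        have hmeas : μ (Set.Iio xl) + μ (Set.Icc xl xr) ≤ μ (Set.Iio x) := by
          rw [← measure_union hdisj measurableSet_Icc]
          exact measure_mono hsub
        have : c + m ≤ (μ (Set.Iio x)).toReal := by
          rw [hc, hm, ← ENNReal.toReal_add (measure_ne_top μ _) (measure_ne_top μ _)]
          exact ENNReal.toReal_mono (measure_ne_top μ _) hmeas
        linarith
      simp [h1, h2]
  · -- Case X > xr + m
    intro X hX
    rw [pseudoInv_eq]
    have hset : {x : ℝ | x + (μ.restrict (Set.Icc xl xr) (Set.Iio x)).toReal < X}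
        = Set.Iio (X - m) := by
      ext x
      simp only [Set.mem_setOf_eq, Set.mem_Iio]
      constructor
      · intro hx
        rcases le_or_gt x xr with h | h
        · linarith
        · have hIcc : Set.Iio x ∩ Set.Icc xl xr = Set.Icc xl xr := by
            apply Set.inter_eq_right.mpr
            intro y hy
            exact lt_of_le_of_lt hy.2 h
          rw [hres, hIcc] at hx
          linarith
      · intro hx
        have := hle_m x
        linarith
    rw [hset, csSup_Iio]
end

section
/- L² bound for a function parametrized by two monotone changes of variables. Let 𝒳, 𝒴 : ℝ → ℝ be nondecreasing functions with 𝒳(s) + 𝒴(s) = 2s for all s ∈ ℝ (hence both are Lipschitz with constant 2). Let U₁, U₂ : ℝ → ℝ be Borel measurable with ∫_ℝ U₁² dx < ∞ and ∫_ℝ U₂² dx < ∞, and let U : ℝ → ℝ satisfy U(s) = U₁(𝒳(s)) and U(s) = U₂(𝒴(s)) for every s ∈ ℝ. Then ∫_ℝ U(s)² ds ≤ ∫_ℝ U₁(x)² dx + ∫_ℝ U₂(x)² dx. -/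
/-!
Both `𝒳` and `𝒴` are monotone with `𝒳 + 𝒴 = 2 id`, hence `2`-Lipschitz, and their Stieltjes
measures `d𝒳`, `d𝒴` add up to twice Lebesgue measure. A continuous monotone `f` pushes `df`
forward to a measure below Lebesgue measure, since `df (f⁻¹ (c, d]) ≤ d - c`. Hence
`∫ U² d𝒳 = ∫ U₁(𝒳)² d𝒳 ≤ ∫ U₁²`, likewise `∫ U² d𝒴 ≤ ∫ U₂²`, and adding the two gives
`2 ∫ U² ≤ ∫ U₁² + ∫ U₂²`.
-/

open MeasureTheory Set ENNReal NNReal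

theorem Monotone.lipschitzWith_of_add_eq_mul {f g : ℝ → ℝ} (hf : Monotone f) (hg : Monotone g)
    {c : ℝ≥0} (hfg : ∀ s, f s + g s = c * s) : LipschitzWith c f := by
  have key : ∀ s t, s ≤ t → |f t - f s| ≤ c * |t - s| := fun s t hst => by
    rw [abs_of_nonneg (sub_nonneg.2 (hf hst)), abs_of_nonneg (sub_nonneg.2 hst)]
    linarith [hfg s, hfg t, hg hst]
  refine LipschitzWith.of_dist_le_mul fun x y => ?_
  rw [Real.dist_eq, Real.dist_eq]
  rcases le_total x y with h | h
  · rw [abs_sub_comm, abs_sub_comm x]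
    exact key x y h
  · exact key y x h

theorem Real.le_volume_of_measure_Ioc_le (ν : Measure ℝ)
    (h : ∀ a b, ν (Ioc a b) ≤ ENNReal.ofReal (b - a)) : ν ≤ volume := by
  have hvol : (volume : Measure ℝ).toOuterMeasure = StieltjesFunction.id.outer := by
    rw [Real.volume_eq_stieltjes_id, StieltjesFunction.measure_def]
  rw [← Measure.toOuterMeasure_le, hvol, StieltjesFunction.outer, OuterMeasure.le_ofFunction]
  intro s
  rw [StieltjesFunction.length_eq]
  refine le_iInf₂ fun a b => le_iInf fun hs => (measure_mono fun x hx => ?_).trans (h a b)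
  exact hs ⟨hx, not_isBot x⟩

namespace StieltjesFunction

variable (f : StieltjesFunction ℝ)

theorem measure_preimage_Ioc_le (hf : Continuous f) (c d : ℝ) :
    f.measure (f ⁻¹' Ioc c d) ≤ ENNReal.ofReal (d - c) := by
  -- By inner regularity it suffices to bound compact `K`, which lies in `[min K, max K]`.
  rw [(measurableSet_Ioc.preimage f.mono.measurable).measure_eq_iSup_isCompact]
  refine iSup₂_le fun K hK => iSup_le fun hKc => ?_
  rcases K.eq_empty_or_nonempty with rfl | hne
  · simp
  have hc : c < f (sInf K) := (hK (hKc.sInf_mem hne)).1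
  have hd : f (sSup K) ≤ d := (hK (hKc.sSup_mem hne)).2
  calc f.measure K ≤ f.measure (Icc (sInf K) (sSup K)) :=
        measure_mono fun x hx => ⟨csInf_le hKc.bddBelow hx, le_csSup hKc.bddAbove hx⟩
    _ = ENNReal.ofReal (f (sSup K) - f (sInf K)) := by
        rw [measure_Icc, hf.continuousWithinAt.leftLim_eq]
    _ ≤ ENNReal.ofReal (d - c) := ENNReal.ofReal_le_ofReal (by linarith)

theorem map_measure_le_volume (hf : Continuous f) : f.measure.map f ≤ volume :=
  Real.le_volume_of_measure_Ioc_le _ fun a b => by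
    rw [Measure.map_apply f.mono.measurable measurableSet_Ioc]
    exact f.measure_preimage_Ioc_le hf a b

theorem lintegral_comp_le (hf : Continuous f) {φ : ℝ → ℝ≥0∞} (hφ : AEMeasurable φ) :
    ∫⁻ s, φ (f s) ∂f.measure ≤ ∫⁻ x, φ x := by
  have hle := f.map_measure_le_volume hf
  rw [← lintegral_map' (hφ.mono_measure hle) f.mono.measurable.aemeasurable]
  exact lintegral_mono' hle le_rfl

end StieltjesFunction

theorem lintegral_mul_le_of_monotone_add_eq_mul {F G : ℝ → ℝ} (hF : Monotone F)
    (hG : Monotone G) {c : ℝ≥0} (hFG : ∀ s, F s + G s = c * s)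
    {φ ψ u : ℝ → ℝ≥0∞} (hφ : AEMeasurable φ) (hψ : AEMeasurable ψ)
    (hu : ∀ s, u s = φ (F s) ∧ u s = ψ (G s)) :
    c * ∫⁻ s, u s ≤ (∫⁻ x, φ x) + ∫⁻ x, ψ x := by
  have hFc : Continuous F := (hF.lipschitzWith_of_add_eq_mul hG hFG).continuous
  have hGc : Continuous G :=
    (hG.lipschitzWith_of_add_eq_mul hF fun s => (add_comm _ _).trans (hFG s)).continuous
  let SF : StieltjesFunction ℝ := ⟨F, hF, fun _ => hFc.continuousWithinAt⟩
  let SG : StieltjesFunction ℝ := ⟨G, hG, fun _ => hGc.continuousWithinAt⟩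
  have hvol : c • (volume : Measure ℝ) = SF.measure + SG.measure := by
    rw [Real.volume_eq_stieltjes_id, ← StieltjesFunction.measure_smul,
      ← StieltjesFunction.measure_add]
    congr 1
    exact StieltjesFunction.ext fun s => (hFG s).symm
  calc (c : ℝ≥0∞) * ∫⁻ s, u s = ∫⁻ s, u s ∂SF.measure + ∫⁻ s, u s ∂SG.measure := by
        rw [← lintegral_add_measure, ← hvol, lintegral_smul_measure]; rfl
    _ ≤ (∫⁻ x, φ x) + ∫⁻ x, ψ x := add_le_add
        (by simpa only [(hu _).1] using SF.lintegral_comp_le hFc hφ)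
        (by simpa only [(hu _).2] using SG.lintegral_comp_le hGc hψ)

theorem integral_le_of_lintegral_ofReal_le {α : Type*} [MeasurableSpace α] {μ : Measure α}
    {f g : α → ℝ} (hf : 0 ≤ᵐ[μ] f) (hg : Integrable g μ) (hg₀ : 0 ≤ᵐ[μ] g)
    (h : ∫⁻ x, ENNReal.ofReal (f x) ∂μ ≤ ∫⁻ x, ENNReal.ofReal (g x) ∂μ) :
    ∫ x, f x ∂μ ≤ ∫ x, g x ∂μ := by
  by_cases hfi : Integrable f μ
  · rwa [← ENNReal.ofReal_le_ofReal_iff (integral_nonneg_of_ae hg₀),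
      ofReal_integral_eq_lintegral_ofReal hfi hf, ofReal_integral_eq_lintegral_ofReal hg hg₀]
  · rw [integral_undef hfi]
    exact integral_nonneg_of_ae hg₀

theorem L2_bound_parametrized_general
    (𝒳 𝒴 : ℝ → ℝ) (hX : Monotone 𝒳) (hY : Monotone 𝒴)
    (hXY : ∀ s : ℝ, 𝒳 s + 𝒴 s = 2 * s)
    (U₁ U₂ U : ℝ → ℝ)
    (hU₁i : Integrable (fun x => U₁ x ^ 2))
    (hU₂i : Integrable (fun x => U₂ x ^ 2))
    (hU : ∀ s : ℝ, U s = U₁ (𝒳 s) ∧ U s = U₂ (𝒴 s)) :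
    ∫ s, U s ^ 2 ≤ (∫ x, U₁ x ^ 2) + ∫ x, U₂ x ^ 2 := by
  have hlintegral : ∫⁻ s, ENNReal.ofReal (U s ^ 2) ≤ ∫⁻ x, ENNReal.ofReal (U₁ x ^ 2 + U₂ x ^ 2) :=
    calc ∫⁻ s, ENNReal.ofReal (U s ^ 2)
        ≤ (2 : ℝ≥0) * ∫⁻ s, ENNReal.ofReal (U s ^ 2) := le_mul_of_one_le_left' (by norm_num)
      _ ≤ (∫⁻ x, ENNReal.ofReal (U₁ x ^ 2)) + ∫⁻ x, ENNReal.ofReal (U₂ x ^ 2) :=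
          lintegral_mul_le_of_monotone_add_eq_mul hX hY (by exact_mod_cast hXY)
            hU₁i.aemeasurable.ennreal_ofReal hU₂i.aemeasurable.ennreal_ofReal
            fun s => ⟨by rw [(hU s).1], by rw [(hU s).2]⟩
      _ = ∫⁻ x, ENNReal.ofReal (U₁ x ^ 2 + U₂ x ^ 2) :=
          (lintegral_add_left' hU₁i.aemeasurable.ennreal_ofReal _).symm.trans
            (lintegral_congr fun x => (ENNReal.ofReal_add (sq_nonneg _) (sq_nonneg _)).symm)
  rw [← integral_add hU₁i hU₂i]
  exact integral_le_of_lintegral_ofReal_le (ae_of_all _ fun s => sq_nonneg (U s))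
    (hU₁i.add hU₂i) (ae_of_all _ fun x => add_nonneg (sq_nonneg (U₁ x)) (sq_nonneg (U₂ x)))
    hlintegral

/-- L² bound for a function parametrized by two monotone changes of
variables: if `𝒳, 𝒴` are nondecreasing with `𝒳 s + 𝒴 s = 2s`, `U₁, U₂` are Borel
measurable with square-integrable, and `U s = U₁ (𝒳 s) = U₂ (𝒴 s)`, then
`∫ U² ≤ ∫ U₁² + ∫ U₂²`. -/
theorem L2_bound_parametrized
    (𝒳 𝒴 : ℝ → ℝ) (hX : Monotone 𝒳) (hY : Monotone 𝒴)
    (hXY : ∀ s : ℝ, 𝒳 s + 𝒴 s = 2 * s)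
    (U₁ U₂ U : ℝ → ℝ) (hU₁m : Measurable U₁) (hU₂m : Measurable U₂)
    (hU₁i : Integrable (fun x => U₁ x ^ 2))
    (hU₂i : Integrable (fun x => U₂ x ^ 2))
    (hU : ∀ s : ℝ, U s = U₁ (𝒳 s) ∧ U s = U₂ (𝒴 s)) :
    ∫ s, U s ^ 2 ≤ (∫ x, U₁ x ^ 2) + ∫ x, U₂ x ^ 2 :=
  L2_bound_parametrized_general 𝒳 𝒴 hX hY hXY U₁ U₂ U hU₁i hU₂i hU
end

section
/- Well-definedness and Lipschitz continuity of the space variable along a monotone curve. Let 𝒳, 𝒴 : ℝ → ℝ be nondecreasing and locally absolutely continuous with 𝒳(s) + 𝒴(s) = 2s for all s (hence both Lipschitz with constant 2, differentiable almost everywhere). Let 𝒱, 𝒲 : ℝ → [0,∞) be bounded Borel measurable functions such that 𝒱(𝒳(s))·𝒳'(s) = 𝒲(𝒴(s))·𝒴'(s) for almost every s ∈ ℝ, and define x : ℝ → ℝ by x(s) = ∫₀^s ( 𝒱(𝒳(σ))𝒳'(σ) + 𝒲(𝒴(σ))𝒴'(σ) ) dσ. Then: (i) whenever 𝒳(s)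 = 𝒳(s̄) one has x(s) = x(s̄); (ii) |x(s) − x(s̄)| ≤ 2·(sup 𝒱)·|𝒳(s) − 𝒳(s̄)| for all s, s̄ ∈ ℝ. Consequently there exists a function x₁ defined on the range of 𝒳, Lipschitz with constant 2·sup 𝒱, such that x₁(𝒳(s)) = x(s) for all s ∈ ℝ. -/
open MeasureTheory

open Filter in

lemma mono_deriv_nonneg {f : ℝ → ℝ} (hf : Monotone f) {d s : ℝ}
    (h : HasDerivAt f d s) : 0 ≤ d := by
  have h1 : Tendsto (slope f s) (nhdsWithin s (Set.Ioi s)) (nhds d) :=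
    (hasDerivAt_iff_tendsto_slope.1 h).mono_left
      (nhdsWithin_mono s fun t ht => ne_of_gt ht)
  refine ge_of_tendsto h1 ?_
  filter_upwards [self_mem_nhdsWithin] with t ht
  have : (0:ℝ) < t - s := sub_pos.2 ht
  simp only [slope_def_field]
  exact div_nonneg (sub_nonneg.2 (hf (le_of_lt ht))) this.le


/-- Well-definedness and Lipschitz continuity of the space variable
along a monotone curve. `𝒳, 𝒴` are nondecreasing, locally absolutely continuous
(encoded via a.e. derivatives `DX, DY` and the fundamental theorem of calculus) with
`𝒳 s + 𝒴 s = 2s`; `𝒱, 𝒲 ≥ 0` are bounded Borel measurable with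
`𝒱(𝒳 s)·𝒳'(s) = 𝒲(𝒴 s)·𝒴'(s)` a.e., and
`x(s) = ∫₀ˢ (𝒱(𝒳 σ)𝒳'(σ) + 𝒲(𝒴 σ)𝒴'(σ)) dσ`. Then `x` only depends on `𝒳`,
`|x s - x s'| ≤ 2·(sup 𝒱)·|𝒳 s - 𝒳 s'|`, and `x` factors through a function `x₁`
on the range of `𝒳` which is Lipschitz with constant `2·(sup 𝒱)` there. -/
theorem space_variable_along_curve
    (𝒳 𝒴 : ℝ → ℝ) (hXm : Monotone 𝒳) (hYm : Monotone 𝒴)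
    (hsum : ∀ s : ℝ, 𝒳 s + 𝒴 s = 2 * s)
    (DX DY : ℝ → ℝ)
    (hDX : ∀ᵐ s ∂(volume : Measure ℝ), HasDerivAt 𝒳 (DX s) s)
    (hDY : ∀ᵐ s ∂(volume : Measure ℝ), HasDerivAt 𝒴 (DY s) s)
    (hFTCX : ∀ a b : ℝ, 𝒳 b - 𝒳 a = ∫ s in a..b, DX s)
    (hFTCY : ∀ a b : ℝ, 𝒴 b - 𝒴 a = ∫ s in a..b, DY s)
    (𝒱 𝒲 : ℝ → ℝ) (hVm : Measurable 𝒱) (hWm : Measurable 𝒲)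
    (hV0 : ∀ X : ℝ, 0 ≤ 𝒱 X) (hW0 : ∀ Y : ℝ, 0 ≤ 𝒲 Y)
    (C : ℝ) (hVC : ∀ X : ℝ, 𝒱 X ≤ C)
    (C' : ℝ) (hWC : ∀ Y : ℝ, 𝒲 Y ≤ C')
    (hbal : ∀ᵐ s ∂(volume : Measure ℝ), 𝒱 (𝒳 s) * DX s = 𝒲 (𝒴 s) * DY s)
    (x : ℝ → ℝ)
    (hx : ∀ s : ℝ, x s = ∫ σ in (0:ℝ)..s, (𝒱 (𝒳 σ) * DX σ + 𝒲 (𝒴 σ) * DY σ)) :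
    (∀ s s' : ℝ, 𝒳 s = 𝒳 s' → x s = x s') ∧
    (∀ s s' : ℝ, |x s - x s'| ≤ 2 * C * |𝒳 s - 𝒳 s'|) ∧
    ∃ x₁ : ℝ → ℝ, (∀ s : ℝ, x₁ (𝒳 s) = x s) ∧
      ∀ X ∈ Set.range 𝒳, ∀ Y ∈ Set.range 𝒳, |x₁ X - x₁ Y| ≤ 2 * C * |X - Y| := by
  have hXmeas : Measurable 𝒳 := hXm.measurable
  have hYmeas : Measurable 𝒴 := hYm.measurable
  have hDXae : DX =ᵐ[(volume : Measure ℝ)] deriv 𝒳 :=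
    hDX.mono fun s hs => (hs.deriv).symm
  have hDYae : DY =ᵐ[(volume : Measure ℝ)] deriv 𝒴 :=
    hDY.mono fun s hs => (hs.deriv).symm
  have hDXmeas : AEMeasurable DX (volume : Measure ℝ) :=
    (measurable_deriv 𝒳).aemeasurable.congr hDXae.symm
  have hDYmeas : AEMeasurable DY (volume : Measure ℝ) :=
    (measurable_deriv 𝒴).aemeasurable.congr hDYae.symm
  have hDX0 : ∀ᵐ s ∂(volume : Measure ℝ), 0 ≤ DX s :=
    hDX.mono fun s hs => mono_deriv_nonneg hXm hs
  have hDY0 : ∀ᵐ s ∂(volume : Measure ℝ), 0 ≤ DY s :=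
    hDY.mono fun s hs => mono_deriv_nonneg hYm hs
  have hsum2 : ∀ᵐ s ∂(volume : Measure ℝ), DX s + DY s = 2 := by
    filter_upwards [hDX, hDY] with s h1 h2
    have h3 : HasDerivAt (fun t => 𝒳 t + 𝒴 t) (DX s + DY s) s := h1.add h2
    have h4 : (fun t => 𝒳 t + 𝒴 t) = fun t => 2 * t := funext fun t => hsum t
    rw [h4] at h3
    have h5 : HasDerivAt (fun t : ℝ => 2 * t) 2 s := by
      simpa using (hasDerivAt_id s).const_mul (2:ℝ)
    exact h3.unique h5
  have hDXle : ∀ᵐ s ∂(volume : Measure ℝ), DX s ≤ 2 := by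
    filter_upwards [hsum2, hDY0] with s h1 h2; linarith
  have hC0 : 0 ≤ C := le_trans (hV0 0) (hVC 0)
  have hC'0 : 0 ≤ C' := le_trans (hW0 0) (hWC 0)
  set f : ℝ → ℝ := fun σ => 𝒱 (𝒳 σ) * DX σ + 𝒲 (𝒴 σ) * DY σ with hf
  set g : ℝ → ℝ := fun σ => 2 * (𝒱 (𝒳 σ) * DX σ) with hg
  have hfg : ∀ᵐ σ ∂(volume : Measure ℝ), f σ = g σ := by
    filter_upwards [hbal] with σ h; simp only [hf, hg]; linarith
  have hfmeas : AEMeasurable f (volume : Measure ℝ) :=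
    ((hVm.comp hXmeas).aemeasurable.mul hDXmeas).add
      ((hWm.comp hYmeas).aemeasurable.mul hDYmeas)
  have hgmeas : AEMeasurable g (volume : Measure ℝ) :=
    (aemeasurable_const.mul ((hVm.comp hXmeas).aemeasurable.mul hDXmeas))
  have hfbd : ∀ᵐ σ ∂(volume : Measure ℝ), ‖f σ‖ ≤ 2 * C + 2 * C' := by
    filter_upwards [hDX0, hDXle, hDY0, hsum2] with σ h1 h2 h3 h4
    have hVb := hVC (𝒳 σ); have hWb := hWC (𝒴 σ)
    have hV := hV0 (𝒳 σ); have hW := hW0 (𝒴 σ)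
    have hDYle : DY σ ≤ 2 := by linarith
    have h5 : 0 ≤ f σ := by
      simp only [hf]; positivity
    have h6 : f σ ≤ 2 * C + 2 * C' := by
      simp only [hf]
      have := mul_le_mul hVb h2 h1 hC0
      have := mul_le_mul hWb hDYle h3 hC'0
      linarith
    rw [Real.norm_eq_abs, abs_of_nonneg h5]; exact h6
  have hbdint : ∀ (h : ℝ → ℝ) (M : ℝ), AEMeasurable h (volume : Measure ℝ) →
      (∀ᵐ σ ∂(volume : Measure ℝ), ‖h σ‖ ≤ M) →
      ∀ a b : ℝ, IntervalIntegrable h (volume : Measure ℝ) a b := by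
    intro h M hm hb a b
    exact (intervalIntegrable_const (c := M)).mono_fun'
      hm.aestronglyMeasurable.restrict (ae_restrict_of_ae hb)
  have hfint : ∀ a b : ℝ, IntervalIntegrable f (volume : Measure ℝ) a b :=
    hbdint f _ hfmeas hfbd
  have hgbd : ∀ᵐ σ ∂(volume : Measure ℝ), ‖g σ‖ ≤ 2 * C + 2 * C' := by
    filter_upwards [hfbd, hfg] with σ h1 h2; rw [← h2]; exact h1
  have hgint : ∀ a b : ℝ, IntervalIntegrable g (volume : Measure ℝ) a b :=
    hbdint g _ hgmeas hgbd
  have hDXint : ∀ a b : ℝ, IntervalIntegrable DX (volume : Measure ℝ) a b := by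
    intro a b
    refine hbdint DX 2 hDXmeas ?_ a b
    filter_upwards [hDX0, hDXle] with σ h1 h2
    rw [Real.norm_eq_abs, abs_of_nonneg h1]; exact h2
  -- main estimate
  have key : ∀ a b : ℝ, a ≤ b →
      0 ≤ x b - x a ∧ x b - x a ≤ 2 * C * (𝒳 b - 𝒳 a) := by
    intro a b hab
    have e1 : x b - x a = ∫ σ in a..b, f σ := by
      rw [hx b, hx a]
      exact intervalIntegral.integral_interval_sub_left (hfint 0 b) (hfint 0 a)
    have e2 : (∫ σ in a..b, f σ) = ∫ σ in a..b, g σ :=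
      intervalIntegral.integral_congr_ae (hfg.mono fun σ h _ => h)
    have hge : (0:ℝ) ≤ ∫ σ in a..b, g σ := by
      refine intervalIntegral.integral_nonneg_of_ae hab ?_
      filter_upwards [hDX0] with σ h1
      have := hV0 (𝒳 σ); simp only [hg, Pi.zero_apply]; positivity
    have hle : (∫ σ in a..b, g σ) ≤ ∫ σ in a..b, (2 * C) * DX σ := by
      refine intervalIntegral.integral_mono_ae hab (hgint a b)
        ((hDXint a b).const_mul (2 * C)) ?_
      filter_upwards [hDX0] with σ h1
      simp only [hg]
      have := mul_le_mul_of_nonneg_right (hVC (𝒳 σ)) h1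
      nlinarith
    have e3 : (∫ σ in a..b, (2 * C) * DX σ) = 2 * C * (𝒳 b - 𝒳 a) := by
      rw [intervalIntegral.integral_const_mul, ← hFTCX a b]
    constructor
    · rw [e1, e2]; exact hge
    · rw [e1, e2]; rw [e3] at hle; exact hle
  have lip : ∀ s s' : ℝ, |x s - x s'| ≤ 2 * C * |𝒳 s - 𝒳 s'| := by
    intro s s'
    rcases le_total s' s with h | h
    · obtain ⟨h1, h2⟩ := key s' s h
      rw [abs_of_nonneg h1, abs_of_nonneg (sub_nonneg.2 (hXm h))]
      exact h2
    · obtain ⟨h1, h2⟩ := key s s' h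
      rw [abs_sub_comm (x s), abs_sub_comm (𝒳 s),
        abs_of_nonneg h1, abs_of_nonneg (sub_nonneg.2 (hXm h))]
      exact h2
  have welldef : ∀ s s' : ℝ, 𝒳 s = 𝒳 s' → x s = x s' := by
    intro s s' h
    have := lip s s'
    rw [h, sub_self, abs_zero, mul_zero] at this
    have := abs_nonpos_iff.1 (le_antisymm this (abs_nonneg _)).le
    linarith [sub_eq_zero.1 this]
  refine ⟨welldef, lip, x ∘ Function.invFun 𝒳, ?_, ?_⟩
  · intro s
    have h : 𝒳 (Function.invFun 𝒳 (𝒳 s)) = 𝒳 s :=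
      Function.invFun_eq ⟨s, rfl⟩
    exact welldef _ _ h
  · rintro X ⟨s, rfl⟩ Y ⟨t, rfl⟩
    have h1 : 𝒳 (Function.invFun 𝒳 (𝒳 s)) = 𝒳 s := Function.invFun_eq ⟨s, rfl⟩
    have h2 : 𝒳 (Function.invFun 𝒳 (𝒳 t)) = 𝒳 t := Function.invFun_eq ⟨t, rfl⟩
    have := lip (Function.invFun 𝒳 (𝒳 s)) (Function.invFun 𝒳 (𝒳 t))
    rw [h1, h2] at this
    exact this
end
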